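/- arXiv:2406.08197 — 5 statements merged into one kernel-verified Lean document; each statement's English description precedes it below -/
import Mathlib

section
/- Let k ≥ 2 and let V_k = {x ∈ ℕ^k : gcd(x₁,…,x_k) = 1}. Then for every positive integer L, |V_k ∩ [1,L]^k| = ∑_{m=1}^{L} ∑_{j=1}^{k} (−1)^{j−1} · C(k,j) · J_{k−j}(m), where C(k,j) is the binomial coefficient. -/
/-- The Jordan totient `J_t(n) = ∑_{d ∣ n} μ(d) (n/d)^t`.  For `t ≥ 1` this
agrees with `n^t ∏_{p ∣ n} (1 - 1/p^t)`, and for `t = 0` it gives `J_0(1) = 1`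
and `J_0(n) = 0` for `n ≥ 2`. -/
def jordanTotient (t n : ℕ) : ℤ :=
  ∑ d ∈ n.divisors, ArithmeticFunction.moebius d * ((n / d : ℕ) : ℤ) ^ t

/-- The number of points of `V_k ∩ [1,L]^k`, where
`V_k = {x ∈ ℕ^k : gcd(x₁,…,x_k) = 1}` is the set of points of `ℕ^k`
visible from the origin. -/
def visCount (k L : ℕ) : ℕ :=
  (((Fintype.piFinset fun _ : Fin k => Finset.Icc 1 L)).filter
      (fun x => Finset.univ.gcd x = 1)).card

open Finset ArithmeticFunction

lemma moebius_divisor_sum (n : ℕ) :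
    ∑ d ∈ n.divisors, (moebius d : ℤ) = if n = 1 then 1 else 0 := by
  have h := congrArg (fun f : ArithmeticFunction ℤ => f n) moebius_mul_coe_zeta
  simp only [mul_apply, one_apply] at h
  rw [← h, ← Nat.sum_divisorsAntidiagonal (f := fun d _ => (moebius d : ℤ))]
  apply Finset.sum_congr rfl
  intro x hx
  rw [Nat.mem_divisorsAntidiagonal] at hx
  have h2 : x.2 ≠ 0 := by rintro h0; exact hx.2 (by simpa [h0] using hx.1.symm)
  simp [natCoe_apply, zeta_apply, h2]



lemma binom_alt (q : ℤ) (k : ℕ) :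
    ∑ j ∈ range (k+1), (-1)^j * (k.choose j : ℤ) * q^(k-j) = (q-1)^k := by
  rw [sub_pow, ← Finset.sum_range_reflect]
  apply Finset.sum_congr rfl
  intro j hj
  rw [Finset.mem_range] at hj
  have e : k + 1 - 1 - j = k - j := by omega
  rw [e, Nat.choose_symm (by omega : j ≤ k)]
  have e2 : k - (k - j) = j := by omega
  rw [e2]
  have hsgn : ((-1 : ℤ))^(k - j) = (-1)^(j + k) := by
    rw [show j + k = (k - j) + 2*j by omega, pow_add, pow_mul]
    simp
  rw [hsgn]; ring

lemma key1 (q : ℤ) (k : ℕ) (hk : 1 ≤ k) :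
    ∑ j ∈ Icc 1 k, (-1)^(j-1) * (k.choose j : ℤ) * q^(k-j) = q^k - (q-1)^k := by
  have hr : range (k+1) = insert 0 (Icc 1 k) := by
    ext i; simp [Finset.mem_range, Finset.mem_Icc]; omega
  have hb := binom_alt q k
  rw [hr, Finset.sum_insert (by simp)] at hb
  simp only [pow_zero, Nat.choose_zero_right, Nat.cast_one, Nat.sub_zero, one_mul] at hb
  have : ∑ j ∈ Icc 1 k, (-1:ℤ)^j * (k.choose j : ℤ) * q^(k-j)
      = - ∑ j ∈ Icc 1 k, (-1)^(j-1) * (k.choose j : ℤ) * q^(k-j) := by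
    rw [← Finset.sum_neg_distrib]
    apply Finset.sum_congr rfl
    intro j hj
    rw [Finset.mem_Icc] at hj
    obtain ⟨i, rfl⟩ : ∃ i, j = i + 1 := ⟨j - 1, by omega⟩
    have : (-1:ℤ)^(i+1) = -(-1)^(i+1-1) := by simp [pow_succ]
    rw [this]; ring
  rw [this] at hb
  linarith

lemma telescope (N k : ℕ) (hk : 1 ≤ k) :
    ∑ q ∈ Icc 1 N, (((q:ℤ))^k - ((q:ℤ)-1)^k) = (N:ℤ)^k := by
  have h := Finset.sum_range_sub (fun i => ((i:ℤ))^k) N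
  rw [Nat.cast_zero, zero_pow (by omega : k ≠ 0), sub_zero] at h
  rw [← h]
  rw [show Finset.Icc 1 N = Finset.map ⟨fun i => i + 1, fun a b h => by simpa using h⟩ (Finset.range N) by
    ext i
    simp only [Finset.mem_Icc, Finset.mem_map, Finset.mem_range,
      Function.Embedding.coeFn_mk, DFunLike.coe]
    constructor
    · rintro ⟨h1, h2⟩; exact ⟨i - 1, by omega, by omega⟩
    · rintro ⟨a, ha, rfl⟩; omega]
  rw [Finset.sum_map]
  apply Finset.sum_congr rfl
  intro i _
  simp only [Function.Embedding.coeFn_mk, DFunLike.coe]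
  push_cast
  ring

lemma reindex (L : ℕ) (F : ℕ → ℕ → ℤ) :
    ∑ m ∈ Icc 1 L, ∑ d ∈ m.divisors, F d (m / d)
      = ∑ d ∈ Icc 1 L, ∑ q ∈ Icc 1 (L / d), F d q := by
  rw [Finset.sum_sigma', Finset.sum_sigma']
  apply Finset.sum_nbij' (fun x => (⟨x.2, x.1 / x.2⟩ : (_ : ℕ) × ℕ))
    (fun y => (⟨y.1 * y.2, y.1⟩ : (_ : ℕ) × ℕ))
  · rintro ⟨m, d⟩ h
    simp only [Finset.mem_sigma, Finset.mem_Icc, Nat.mem_divisors] at h ⊢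
    obtain ⟨⟨h1, h2⟩, hd, hm0⟩ := h
    obtain ⟨e, rfl⟩ := hd
    rcases Nat.eq_zero_or_pos d with rfl | hd0
    · simp at h1
    rcases Nat.eq_zero_or_pos e with rfl | he0
    · simp at h1
    have hdiv : d * e / d = e := Nat.mul_div_cancel_left _ hd0
    have h3 : d * e / d ≤ L / d := Nat.div_le_div_right h2
    rw [hdiv] at h3
    rw [hdiv]
    exact ⟨⟨hd0, le_trans (Nat.le_mul_of_pos_right _ he0) h2⟩, he0, h3⟩
  · rintro ⟨d, q⟩ h
    simp only [Finset.mem_sigma, Finset.mem_Icc, Nat.mem_divisors] at h ⊢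
    obtain ⟨⟨hd1, hdL⟩, hq1, hqL⟩ := h
    have hmul : q * d ≤ L := (Nat.le_div_iff_mul_le hd1).1 hqL
    refine ⟨⟨Nat.mul_pos hd1 hq1, by rw [mul_comm]; exact hmul⟩, ⟨q, rfl⟩, by positivity⟩
  · rintro ⟨m, d⟩ h
    simp only [Finset.mem_sigma, Finset.mem_Icc, Nat.mem_divisors] at h
    obtain ⟨⟨h1, h2⟩, hd, hm0⟩ := h
    simp only
    rw [Nat.mul_div_cancel' hd]
  · rintro ⟨d, q⟩ h
    simp only [Finset.mem_sigma, Finset.mem_Icc] at h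
    simp only
    rw [Nat.mul_div_cancel_left _ h.1.1]
  · rintro ⟨m, d⟩ h
    rfl

lemma stepB (k L : ℕ) (hk : 1 ≤ k) :
    (∑ m ∈ Icc 1 L, ∑ j ∈ Icc 1 k,
        (-1) ^ (j - 1) * (k.choose j : ℤ) * jordanTotient (k - j) m)
      = ∑ d ∈ Icc 1 L, (moebius d : ℤ) * ((L / d : ℕ) : ℤ)^k := by
  have h1 : ∀ m ∈ Icc 1 L,
      (∑ j ∈ Icc 1 k, (-1:ℤ) ^ (j - 1) * (k.choose j : ℤ) * jordanTotient (k - j) m)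
        = ∑ d ∈ m.divisors,
            (moebius d : ℤ) * (((m / d : ℕ) : ℤ)^k - (((m / d : ℕ) : ℤ) - 1)^k) := by
    intro m hm
    simp only [jordanTotient, Finset.mul_sum]
    rw [Finset.sum_comm]
    apply Finset.sum_congr rfl
    intro d hd
    rw [← key1 (((m / d : ℕ) : ℤ)) k hk, Finset.mul_sum]
    apply Finset.sum_congr rfl
    intro j hj
    ring
  rw [Finset.sum_congr rfl h1,
    reindex L (fun d q => (moebius d : ℤ) * (((q:ℕ) : ℤ)^k - (((q:ℕ) : ℤ) - 1)^k))]
  apply Finset.sum_congr rfl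
  intro d hd
  rw [← Finset.mul_sum, telescope (L / d) k hk]

lemma stepA (k L : ℕ) (hk : 1 ≤ k) (hL : 0 < L) :
    (visCount k L : ℤ) = ∑ d ∈ Icc 1 L, (moebius d : ℤ) * ((L / d : ℕ) : ℤ)^k := by
  classical
  have key : ∀ x ∈ Fintype.piFinset fun _ : Fin k => Finset.Icc 1 L,
      (if Finset.univ.gcd x = 1 then (1:ℤ) else 0)
        = ∑ d ∈ Icc 1 L, (if d ∣ Finset.univ.gcd x then (moebius d : ℤ) else 0) := by
    intro x hx
    set g := Finset.univ.gcd x with hg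
    have hx' : ∀ i, x i ∈ Finset.Icc 1 L := Fintype.mem_piFinset.1 hx
    have i0 : Fin k := ⟨0, by omega⟩
    have hxi0 := Finset.mem_Icc.1 (hx' i0)
    have hgdvd : g ∣ x i0 := Finset.gcd_dvd (Finset.mem_univ i0)
    have hg0 : 0 < g := Nat.pos_of_dvd_of_pos hgdvd (by omega)
    have hgL : g ≤ L := le_trans (Nat.le_of_dvd (by omega) hgdvd) hxi0.2
    have hdiv : g.divisors = (Icc 1 L).filter (· ∣ g) := by
      ext d
      simp only [Nat.mem_divisors, Finset.mem_filter, Finset.mem_Icc]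
      constructor
      · rintro ⟨hd, -⟩
        exact ⟨⟨Nat.pos_of_dvd_of_pos hd hg0, le_trans (Nat.le_of_dvd hg0 hd) hgL⟩, hd⟩
      · rintro ⟨-, hd⟩
        exact ⟨hd, by omega⟩
    rw [← Finset.sum_filter, ← hdiv, moebius_divisor_sum]
  rw [visCount, Finset.card_filter]
  push_cast
  rw [Finset.sum_congr rfl key, Finset.sum_comm]
  apply Finset.sum_congr rfl
  intro d hd
  have hd1 : 0 < d := (Finset.mem_Icc.1 hd).1
  rw [← Finset.sum_filter]
  have hfilter : (Fintype.piFinset fun _ : Fin k => Finset.Icc 1 L).filter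
      (fun x => d ∣ Finset.univ.gcd x)
      = Fintype.piFinset fun _ : Fin k => (Finset.Icc 1 L).filter (d ∣ ·) := by
    ext x
    simp only [Finset.mem_filter, Fintype.mem_piFinset, Finset.dvd_gcd_iff, Finset.mem_univ,
      forall_true_left]
    exact forall_and.symm
  rw [Finset.sum_const, hfilter, Fintype.card_piFinset_const]
  have : ((Icc 1 L).filter (d ∣ ·)).card = L / d := by
    rw [show Icc 1 L = Ioc 0 L by ext a; simp [Finset.mem_Icc, Finset.mem_Ioc]; omega]
    exact Nat.Ioc_filter_dvd_card_eq_div L d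
  rw [this]
  simp [mul_comm]

theorem stmt10 (k : ℕ) (hk : 2 ≤ k) (L : ℕ) (hL : 0 < L) :
    (visCount k L : ℤ)
      = ∑ m ∈ Finset.Icc 1 L, ∑ j ∈ Finset.Icc 1 k,
          (-1) ^ (j - 1) * (k.choose j : ℤ) * jordanTotient (k - j) m := by
  rw [stepA k L (by omega) hL, stepB k L (by omega)]
end

section
/- Let k ≥ 3. Then there exists a constant C > 0 such that for all integers L ≥ 2, | k·∑_{m=1}^{L} J_{k−1}(m) − L^k/ζ(k) − (k/2)·L^{k−1}/ζ(k−1) + k·∑_{d=1}^{L} μ(d) (L/d)^{k−1} {L/d} | ≤ C · L^{k−2} log L, where {L/d} = L/d − ⌊L/d⌋ denotes the fractional part. -/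
/-- The value of the Riemann zeta function at a natural number `k ≥ 2`,
as the real series `∑ 1/n^k` (the `n = 0` term vanishes). -/
noncomputable def zetaR (k : ℕ) : ℝ := ∑' n : ℕ, 1 / (n : ℝ) ^ k

open Finset ArithmeticFunction Filter

lemma swap_lemma (L : ℕ) (F : ℕ → ℕ → ℝ) :
    ∑ m ∈ Finset.Icc 1 L, ∑ p ∈ m.divisorsAntidiagonal, F p.1 p.2
      = ∑ d ∈ Finset.Icc 1 L, ∑ e ∈ Finset.Icc 1 (L / d), F d e := by
  rw [Finset.sum_sigma', Finset.sum_sigma']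
  refine Finset.sum_nbij' (fun p => ⟨p.2.1, p.2.2⟩) (fun p => ⟨p.1 * p.2, (p.1, p.2)⟩)
    ?_ ?_ ?_ ?_ ?_
  · rintro ⟨m, a, b⟩ h
    simp only [Finset.mem_sigma, Finset.mem_Icc, Nat.mem_divisorsAntidiagonal] at h ⊢
    obtain ⟨⟨h1, h2⟩, hab, hm0⟩ := h
    have ha : 1 ≤ a := Nat.one_le_iff_ne_zero.mpr (by rintro rfl; simp at hab; omega)
    have hb : 1 ≤ b := Nat.one_le_iff_ne_zero.mpr (by rintro rfl; simp at hab; omega)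
    refine ⟨⟨ha, ?_⟩, hb, ?_⟩
    · calc a ≤ a * b := Nat.le_mul_of_pos_right a hb
        _ ≤ L := by omega
    · rw [Nat.le_div_iff_mul_le ha, mul_comm, hab]; exact h2
  · rintro ⟨d, e⟩ h
    simp only [Finset.mem_sigma, Finset.mem_Icc] at h
    obtain ⟨⟨h1, h2⟩, he1, he2⟩ := h
    rw [Nat.le_div_iff_mul_le h1] at he2
    refine Finset.mem_sigma.mpr ⟨Finset.mem_Icc.mpr ⟨Nat.mul_pos h1 he1, by
      rw [mul_comm] at he2; exact he2⟩, Nat.mem_divisorsAntidiagonal.mpr ⟨rfl, ?_⟩⟩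
    exact (Nat.mul_pos h1 he1).ne'
  · rintro ⟨m, a, b⟩ h
    simp only [Finset.mem_sigma, Nat.mem_divisorsAntidiagonal] at h
    obtain ⟨-, hab, -⟩ := h
    simp [hab]
  · rintro ⟨d, e⟩ h
    rfl
  · rintro ⟨m, a, b⟩ h
    rfl

lemma icc_pow_sum (m N : ℕ) :
    ∑ e ∈ Finset.Icc 1 N, (e:ℚ)^(m+2)
      = ∑ e ∈ Finset.range N, (e:ℚ)^(m+2) + (N:ℚ)^(m+2) := by
  have h1 : ∑ e ∈ Finset.Icc 1 N, (e:ℚ)^(m+2)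
      = ∑ i ∈ Finset.range N, ((1+i :ℕ):ℚ)^(m+2) := by
    rw [← Finset.Ico_add_one_right_eq_Icc, Finset.sum_Ico_eq_sum_range]
    simp
  have h2 : ∑ e ∈ Finset.range (N+1), (e:ℚ)^(m+2)
      = ∑ i ∈ Finset.range N, ((i+1:ℕ):ℚ)^(m+2) + ((0:ℕ):ℚ)^(m+2) :=
    Finset.sum_range_succ' _ N
  have h3 : ∑ e ∈ Finset.range (N+1), (e:ℚ)^(m+2)
      = ∑ e ∈ Finset.range N, (e:ℚ)^(m+2) + (N:ℚ)^(m+2) :=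
    Finset.sum_range_succ _ N
  rw [h1]
  simp only [add_comm 1]
  have h0 : ((0:ℕ):ℚ)^(m+2) = 0 := by simp
  rw [h2, h0, add_zero] at h3
  rw [h3]

lemma faul (m N : ℕ) :
    ((m+3 : ℕ):ℚ) * ∑ e ∈ Finset.Icc 1 N, (e:ℚ)^(m+2)
      = (N:ℚ)^(m+3) + ((m+3:ℕ):ℚ)/2 * (N:ℚ)^(m+2)
        + ∑ i ∈ Finset.range (m+1),
            bernoulli (i+2) * ((m+3).choose (i+2)) * (N:ℚ)^(m+1-i) := by
  rw [icc_pow_sum, mul_add, sum_range_pow N (m+2)]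
  have hne : ((m+2:ℕ):ℚ) + 1 ≠ 0 := by positivity
  have hcast : ((m+3:ℕ):ℚ) = ((m+2:ℕ):ℚ) + 1 := by push_cast; ring
  rw [hcast, Finset.mul_sum]
  have hterm : ∀ i ∈ Finset.range (m+2+1),
      (((m+2:ℕ):ℚ)+1) * (bernoulli i * ((m+2+1).choose i) * (N:ℚ)^(m+2+1-i) / ((m+2:ℕ)+1))
        = bernoulli i * ((m+3).choose i) * (N:ℚ)^(m+3-i) := by
    intro i _
    rw [mul_div_assoc']
    rw [mul_comm (((m+2:ℕ):ℚ)+1), mul_div_assoc, div_self hne, mul_one]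
  rw [Finset.sum_congr rfl hterm]
  rw [Finset.sum_range_succ' _ (m+2), Finset.sum_range_succ' _ (m+1)]
  simp only [bernoulli_zero, bernoulli_one, Nat.choose_zero_right, Nat.choose_one_right]
  have he : ∀ i ∈ Finset.range (m+1),
      bernoulli (i+1+1) * ((m+3).choose (i+1+1)) * (N:ℚ)^(m+3-(i+1+1))
        = bernoulli (i+2) * ((m+3).choose (i+2)) * (N:ℚ)^(m+1-i) := by
    intro i hi
    simp only [Finset.mem_range] at hi
    have : m+3-(i+1+1) = m+1-i := by omega
    rw [this]
  rw [Finset.sum_congr rfl he]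
  rw [bernoulli_one, Nat.choose_one_right]
  push_cast
  ring

lemma faulR (m N : ℕ) :
    ((m+3:ℕ):ℝ) * ∑ e ∈ Finset.Icc 1 N, (e:ℝ)^(m+2) - (N:ℝ)^(m+3)
        - ((m+3:ℕ):ℝ)/2 * (N:ℝ)^(m+2)
      = ∑ i ∈ Finset.range (m+1),
          ((bernoulli (i+2):ℚ):ℝ) * (((m+3).choose (i+2) : ℕ):ℝ) * (N:ℝ)^(m+1-i) := by
  have h2 := congrArg (fun q : ℚ => (q : ℝ)) (faul m N)
  push_cast at h2 ⊢
  linarith [h2]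

lemma faul_est (m : ℕ) : ∃ C1 : ℝ, 0 < C1 ∧ ∀ N : ℕ, 1 ≤ N →
    |((m+3:ℕ):ℝ) * ∑ e ∈ Finset.Icc 1 N, (e:ℝ)^(m+2) - (N:ℝ)^(m+3)
        - ((m+3:ℕ):ℝ)/2 * (N:ℝ)^(m+2)| ≤ C1 * (N:ℝ)^(m+1) := by
  refine ⟨1 + ∑ i ∈ Finset.range (m+1),
      |((bernoulli (i+2):ℚ):ℝ)| * (((m+3).choose (i+2) : ℕ):ℝ), ?_, ?_⟩
  · have : 0 ≤ ∑ i ∈ Finset.range (m+1),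
        |((bernoulli (i+2):ℚ):ℝ)| * (((m+3).choose (i+2) : ℕ):ℝ) := by
      apply Finset.sum_nonneg
      intro i _
      positivity
    linarith
  · intro N hN
    have hN1 : (1:ℝ) ≤ (N:ℝ) := by exact_mod_cast hN
    rw [faulR]
    calc |∑ i ∈ Finset.range (m+1),
          ((bernoulli (i+2):ℚ):ℝ) * (((m+3).choose (i+2) : ℕ):ℝ) * (N:ℝ)^(m+1-i)|
        ≤ ∑ i ∈ Finset.range (m+1),
          |((bernoulli (i+2):ℚ):ℝ) * (((m+3).choose (i+2) : ℕ):ℝ) * (N:ℝ)^(m+1-i)| :=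
          Finset.abs_sum_le_sum_abs _ _
      _ ≤ ∑ i ∈ Finset.range (m+1),
          |((bernoulli (i+2):ℚ):ℝ)| * (((m+3).choose (i+2) : ℕ):ℝ) * (N:ℝ)^(m+1) := by
          apply Finset.sum_le_sum
          intro i _
          rw [abs_mul, abs_mul]
          have h1 : |(((m+3).choose (i+2) : ℕ):ℝ)| = (((m+3).choose (i+2) : ℕ):ℝ) :=
            abs_of_nonneg (by positivity)
          have h2 : |(N:ℝ)^(m+1-i)| = (N:ℝ)^(m+1-i) := abs_of_nonneg (by positivity)
          rw [h1, h2]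
          have h3 : (N:ℝ)^(m+1-i) ≤ (N:ℝ)^(m+1) :=
            pow_le_pow_right₀ hN1 (by omega)
          gcongr
      _ = (∑ i ∈ Finset.range (m+1),
          |((bernoulli (i+2):ℚ):ℝ)| * (((m+3).choose (i+2) : ℕ):ℝ)) * (N:ℝ)^(m+1) := by
          rw [Finset.sum_mul]
      _ ≤ (1 + ∑ i ∈ Finset.range (m+1),
          |((bernoulli (i+2):ℚ):ℝ)| * (((m+3).choose (i+2) : ℕ):ℝ)) * (N:ℝ)^(m+1) := by
          have : (0:ℝ) ≤ (N:ℝ)^(m+1) := by positivity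
          nlinarith

lemma summable_zetaR (s : ℕ) (hs : 2 ≤ s) : Summable (fun n : ℕ => 1/(n:ℝ)^s) :=
  Real.summable_one_div_nat_pow.mpr hs

lemma zetaR_ge_one (s : ℕ) (hs : 2 ≤ s) : 1 ≤ zetaR s := by
  have h := summable_zetaR s hs
  calc (1:ℝ) = 1/((1:ℕ):ℝ)^s := by norm_num
    _ ≤ zetaR s := Summable.le_tsum h 1 (fun n _ => by positivity)

lemma zetaR_pos (s : ℕ) (hs : 2 ≤ s) : 0 < zetaR s :=
  lt_of_lt_of_le one_pos (zetaR_ge_one s hs)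

lemma mu_abs_le (s n : ℕ) : |(moebius n : ℝ)/(n:ℝ)^s| ≤ 1/(n:ℝ)^s := by
  rw [abs_div]
  rcases eq_or_ne n 0 with rfl | hn
  · simp
  · have h1 : |(moebius n : ℝ)| ≤ 1 := by
      have := ArithmeticFunction.abs_moebius_le_one (n := n)
      exact_mod_cast this
    have h2 : |(n:ℝ)^s| = (n:ℝ)^s := abs_of_nonneg (by positivity)
    rw [h2]
    have hnp : (0:ℝ) < (n:ℝ)^s := by
      have : (0:ℝ) < (n:ℝ) := by exact_mod_cast Nat.pos_of_ne_zero hn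
      positivity
    gcongr

lemma summable_mu (s : ℕ) (hs : 2 ≤ s) :
    Summable (fun n : ℕ => (moebius n : ℝ)/(n:ℝ)^s) := by
  apply Summable.of_abs
  exact Summable.of_nonneg_of_le (fun n => abs_nonneg _) (fun n => mu_abs_le s n)
    (summable_zetaR s hs)

section
open LSeries.notation ArithmeticFunction.zeta ArithmeticFunction.Moebius
lemma mu_tsum_mul_zetaR (s : ℕ) (hs : 2 ≤ s) :
    (∑' n : ℕ, (moebius n : ℝ)/(n:ℝ)^s) * zetaR s = 1 := by
  have hs0 : s ≠ 0 := by omega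
  have hsre : 1 < ((s:ℕ):ℂ).re := by
    simp only [Complex.natCast_re]
    exact_mod_cast lt_of_lt_of_le one_lt_two hs
  have key := ArithmeticFunction.LSeries_zeta_mul_Lseries_moebius (s := (s:ℂ)) hsre
  have hz : LSeries ↗ζ (s:ℂ) = ((zetaR s : ℝ) : ℂ) := by
    rw [zetaR, Complex.ofReal_tsum]
    apply tsum_congr
    intro n
    rcases eq_or_ne n 0 with rfl | hn
    · simp [LSeries.term, zero_pow hs0]
    · rw [LSeries.term_of_ne_zero hn, Complex.cpow_natCast]
      simp [ArithmeticFunction.zeta_apply, hn]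
  have hm : LSeries ↗μ (s:ℂ) = ((∑' n : ℕ, (moebius n : ℝ)/(n:ℝ)^s : ℝ) : ℂ) := by
    rw [Complex.ofReal_tsum]
    apply tsum_congr
    intro n
    rcases eq_or_ne n 0 with rfl | hn
    · simp [LSeries.term]
    · rw [LSeries.term_of_ne_zero hn, Complex.cpow_natCast]
      push_cast
      ring
  rw [hz, hm] at key
  rw [mul_comm]
  exact_mod_cast key

end
lemma mu_tsum_eq (s : ℕ) (hs : 2 ≤ s) :
    (∑' n : ℕ, (moebius n : ℝ)/(n:ℝ)^s) = 1 / zetaR s := by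
  rw [eq_div_iff (zetaR_pos s hs).ne']
  exact mu_tsum_mul_zetaR s hs

lemma telescope_hasSum (g : ℕ → ℝ) (h0 : ∀ n, g (n+1) ≤ g n)
    (hlim : Tendsto g atTop (nhds 0)) :
    HasSum (fun n => g n - g (n+1)) (g 0) := by
  rw [hasSum_iff_tendsto_nat_of_nonneg (fun i => by linarith [h0 i])]
  have h : (fun n => ∑ i ∈ Finset.range n, (g i - g (i+1))) = fun n => g 0 - g n := by
    funext n
    exact Finset.sum_range_sub' g n
  rw [h]
  simpa using tendsto_const_nhds.sub hlim

lemma g_tendsto (L : ℕ) (hL : 1 ≤ L) :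
    Tendsto (fun n : ℕ => 1/((n:ℝ)+L)) atTop (nhds 0) := by
  apply squeeze_zero (fun n => by positivity) (g := fun n : ℕ => 1/((n:ℝ)+1))
  · intro n
    have hL1 : (1:ℝ) ≤ (L:ℝ) := by exact_mod_cast hL
    apply div_le_div_of_nonneg_left one_pos.le (by positivity)
    linarith
  · exact tendsto_one_div_add_atTop_nhds_zero_nat

lemma tail2 (L : ℕ) (hL : 1 ≤ L) :
    Summable (fun n : ℕ => 1/((n:ℝ)+L+1)^2) ∧
      ∑' n : ℕ, 1/((n:ℝ)+L+1)^2 ≤ 1/(L:ℝ) := by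
  have hL1 : (1:ℝ) ≤ (L:ℝ) := by exact_mod_cast hL
  set g : ℕ → ℝ := fun n => 1/((n:ℝ)+L) with hg
  have hdec : ∀ n, g (n+1) ≤ g n := by
    intro n
    apply div_le_div_of_nonneg_left one_pos.le (by positivity)
    push_cast; linarith
  have hts := telescope_hasSum g hdec (g_tendsto L hL)
  have hle : ∀ n : ℕ, 1/((n:ℝ)+L+1)^2 ≤ g n - g (n+1) := by
    intro n
    have hx : (1:ℝ) ≤ (n:ℝ)+L := by
      have : (0:ℝ) ≤ (n:ℝ) := Nat.cast_nonneg n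
      linarith
    have p1 : ((n:ℝ)+L) ≠ 0 := by linarith
    have p2 : ((n:ℝ)+1+L) ≠ 0 := by linarith
    have heq : g n - g (n+1) = 1/(((n:ℝ)+L)*((n:ℝ)+L+1)) := by
      simp only [hg]
      push_cast
      field_simp [p1, p2]
      ring
    rw [heq]
    apply div_le_div_of_nonneg_left one_pos.le (by nlinarith)
    nlinarith
  have hsum : Summable (fun n : ℕ => 1/((n:ℝ)+L+1)^2) :=
    Summable.of_nonneg_of_le (fun n => by positivity) hle hts.summable
  refine ⟨hsum, ?_⟩
  calc ∑' n : ℕ, 1/((n:ℝ)+L+1)^2 ≤ ∑' n, (g n - g (n+1)) :=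
        Summable.tsum_le_tsum hle hsum hts.summable
    _ = g 0 := hts.tsum_eq
    _ = 1/(L:ℝ) := by simp [hg]

lemma tail3 (L : ℕ) (hL : 1 ≤ L) :
    Summable (fun n : ℕ => 1/((n:ℝ)+L+1)^3) ∧
      ∑' n : ℕ, 1/((n:ℝ)+L+1)^3 ≤ 1/(L:ℝ)^2 := by
  have hL1 : (1:ℝ) ≤ (L:ℝ) := by exact_mod_cast hL
  set g : ℕ → ℝ := fun n => 1/(2*((n:ℝ)+L)*((n:ℝ)+L+1)) with hg
  have hdec : ∀ n, g (n+1) ≤ g n := by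
    intro n
    have h1 : (0:ℝ) < 2*((n:ℝ)+L)*((n:ℝ)+L+1) := by positivity
    apply div_le_div_of_nonneg_left one_pos.le h1
    push_cast
    nlinarith [Nat.cast_nonneg (α := ℝ) n]
  have hlim : Tendsto g atTop (nhds 0) := by
    apply squeeze_zero (fun n => by positivity) (g := fun n : ℕ => 1/((n:ℝ)+L))
    · intro n
      apply div_le_div_of_nonneg_left one_pos.le (by positivity)
      nlinarith [Nat.cast_nonneg (α := ℝ) n]
    · exact g_tendsto L hL
  have hts := telescope_hasSum g hdec hlim
  have hle : ∀ n : ℕ, 1/((n:ℝ)+L+1)^3 ≤ g n - g (n+1) := by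
    intro n
    have hx : (1:ℝ) ≤ (n:ℝ)+L := by
      have : (0:ℝ) ≤ (n:ℝ) := Nat.cast_nonneg n
      linarith
    have q0 : (0:ℝ) < (n:ℝ)+L := by linarith
    have q1 : (0:ℝ) < (n:ℝ)+L+1 := by linarith
    have q2 : (0:ℝ) < (n:ℝ)+L+2 := by linarith
    have heq : g n - g (n+1)
        = 1/(((n:ℝ)+L)*((n:ℝ)+L+1)*((n:ℝ)+L+2)) := by
      simp only [hg]
      push_cast
      field_simp [q0.ne', q1.ne', q2.ne']
      ring
    rw [heq]
    apply div_le_div_of_nonneg_left one_pos.le (mul_pos (mul_pos q0 q1) q2)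
    nlinarith [mul_pos q0 q1, mul_pos q1 q2]
  have hsum : Summable (fun n : ℕ => 1/((n:ℝ)+L+1)^3) :=
    Summable.of_nonneg_of_le (fun n => by positivity) hle hts.summable
  refine ⟨hsum, ?_⟩
  calc ∑' n : ℕ, 1/((n:ℝ)+L+1)^3 ≤ ∑' n, (g n - g (n+1)) :=
        Summable.tsum_le_tsum hle hsum hts.summable
    _ = g 0 := hts.tsum_eq
    _ = 1/(2*(L:ℝ)*((L:ℝ)+1)) := by simp [hg]
    _ ≤ 1/(L:ℝ)^2 := by
        apply div_le_div_of_nonneg_left one_pos.le (by positivity)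
        nlinarith

lemma sum_range_eq_Icc (f : ℕ → ℝ) (hf0 : f 0 = 0) (L : ℕ) :
    ∑ i ∈ Finset.range (L+1), f i = ∑ d ∈ Finset.Icc 1 L, f d := by
  have h1 : ∑ d ∈ Finset.Icc 1 L, f d = ∑ i ∈ Finset.range L, f (1+i) := by
    rw [← Finset.Ico_add_one_right_eq_Icc, Finset.sum_Ico_eq_sum_range]
    simp
  rw [h1, Finset.sum_range_succ' f L, hf0, add_zero]
  apply Finset.sum_congr rfl
  intro i _
  rw [add_comm]

lemma mu_partial_le (s : ℕ) (hs : 2 ≤ s) (L : ℕ) (ψ : ℕ → ℝ) (B : ℝ)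
    (hψ : Summable ψ) (hψsum : ∑' n, ψ n ≤ B)
    (hle : ∀ n : ℕ, 1/((n:ℝ)+L+1)^s ≤ ψ n) :
    |1/zetaR s - ∑ d ∈ Finset.Icc 1 L, ((moebius d):ℝ)/(d:ℝ)^s| ≤ B := by
  set f : ℕ → ℝ := fun n => (moebius n : ℝ)/(n:ℝ)^s with hf
  have hsumf : Summable f := summable_mu s hs
  have hkey := (Summable.sum_add_tsum_nat_add (f := f) (L+1) hsumf)
  have hrange : ∑ i ∈ Finset.range (L+1), f i = ∑ d ∈ Finset.Icc 1 L, f d := by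
    apply sum_range_eq_Icc
    simp [hf]
  have heq : 1/zetaR s - ∑ d ∈ Finset.Icc 1 L, f d = ∑' n : ℕ, f (n + (L+1)) := by
    rw [← mu_tsum_eq s hs, ← hkey, hrange]
    ring
  rw [heq]
  have hshift : Summable (fun n : ℕ => f (n + (L+1))) :=
    (summable_nat_add_iff (L+1)).2 hsumf
  have habs : ∀ n : ℕ, |f (n + (L+1))| ≤ ψ n := by
    intro n
    calc |f (n + (L+1))| ≤ 1/(((n + (L+1)):ℕ):ℝ)^s := mu_abs_le s _
      _ = 1/((n:ℝ)+L+1)^s := by push_cast; ring_nf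
      _ ≤ ψ n := hle n
  have habs_sum : Summable (fun n : ℕ => |f (n + (L+1))|) := hshift.abs
  calc |∑' n : ℕ, f (n + (L+1))| ≤ ∑' n : ℕ, |f (n + (L+1))| := by
        have := norm_tsum_le_tsum_norm (f := fun n : ℕ => f (n + (L+1)))
          (by simpa [Real.norm_eq_abs] using habs_sum)
        simpa [Real.norm_eq_abs] using this
    _ ≤ ∑' n, ψ n := Summable.tsum_le_tsum habs habs_sum hψ
    _ ≤ B := hψsum

lemma choose_partial_sum_le (n j : ℕ) :
    ∑ i ∈ Finset.range j, ((n.choose i : ℕ):ℝ) ≤ 2^n := by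
  have h1 : ∑ i ∈ Finset.range j, n.choose i ≤ ∑ i ∈ Finset.range (n+1), n.choose i := by
    rcases le_or_gt j (n+1) with h | h
    · exact Finset.sum_le_sum_of_subset (Finset.range_subset_range.mpr h)
    · rw [← Finset.sum_subset (Finset.range_subset_range.mpr h.le)]
      intro i hi hni
      simp only [Finset.mem_range, not_lt] at hni
      exact Nat.choose_eq_zero_of_lt (by omega)
  have h2 : ∑ i ∈ Finset.range (n+1), n.choose i = 2^n := Nat.sum_range_choose n
  calc ∑ i ∈ Finset.range j, ((n.choose i : ℕ):ℝ)
      = ((∑ i ∈ Finset.range j, n.choose i : ℕ):ℝ) := by push_cast; ring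
    _ ≤ ((2^n : ℕ):ℝ) := by exact_mod_cast h1.trans h2.le
    _ = 2^n := by push_cast; ring

lemma bin_tail (n j : ℕ) (x θ : ℝ) (hx : 1 ≤ x) (h0 : 0 ≤ θ) (h1 : θ ≤ 1) :
    |∑ i ∈ Finset.range j, x^i * (-θ)^(n-i) * ((n.choose i:ℕ):ℝ)| ≤ 2^n * x^(j-1) := by
  have hx0 : (0:ℝ) ≤ x := by linarith
  calc |∑ i ∈ Finset.range j, x^i * (-θ)^(n-i) * ((n.choose i:ℕ):ℝ)|
      ≤ ∑ i ∈ Finset.range j, |x^i * (-θ)^(n-i) * ((n.choose i:ℕ):ℝ)| :=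
        Finset.abs_sum_le_sum_abs _ _
    _ ≤ ∑ i ∈ Finset.range j, x^(j-1) * ((n.choose i:ℕ):ℝ) := by
        apply Finset.sum_le_sum
        intro i hi
        simp only [Finset.mem_range] at hi
        rw [abs_mul, abs_mul, abs_pow, abs_pow, abs_neg, abs_of_nonneg hx0,
          abs_of_nonneg h0, Nat.abs_cast]
        have e1 : x^i ≤ x^(j-1) := pow_le_pow_right₀ hx (by omega)
        have e2 : θ^(n-i) ≤ 1 := pow_le_one₀ h0 h1
        have e3 : (0:ℝ) ≤ x^i := by positivity
        have e4 : (0:ℝ) ≤ ((n.choose i:ℕ):ℝ) := by positivity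
        calc x^i * θ^(n-i) * ((n.choose i:ℕ):ℝ) ≤ x^i * 1 * ((n.choose i:ℕ):ℝ) := by
              apply mul_le_mul_of_nonneg_right _ e4
              exact mul_le_mul_of_nonneg_left e2 e3
          _ = x^i * ((n.choose i:ℕ):ℝ) := by ring
          _ ≤ x^(j-1) * ((n.choose i:ℕ):ℝ) := mul_le_mul_of_nonneg_right e1 e4
    _ = (∑ i ∈ Finset.range j, ((n.choose i:ℕ):ℝ)) * x^(j-1) := by
        rw [Finset.sum_mul]
        apply Finset.sum_congr rfl
        intro i _
        ring
    _ ≤ 2^n * x^(j-1) := by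
        apply mul_le_mul_of_nonneg_right (choose_partial_sum_le n j) (by positivity)

lemma binA (m : ℕ) (x θ : ℝ) (hx : 1 ≤ x) (h0 : 0 ≤ θ) (h1 : θ ≤ 1) :
    |(x - θ)^(m+3) - x^(m+3) + ((m+3:ℕ):ℝ)*x^(m+2)*θ| ≤ 2^(m+3) * x^(m+1) := by
  have hexp : (x - θ)^(m+3) = ∑ i ∈ Finset.range (m+4),
      x^i * (-θ)^(m+3-i) * (((m+3).choose i:ℕ):ℝ) := by
    have := add_pow x (-θ) (m+3)
    rw [← sub_eq_add_neg] at this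
    exact_mod_cast this
  rw [hexp, Finset.sum_range_succ, Finset.sum_range_succ]
  have c1 : ((m+3).choose (m+3) : ℕ) = 1 := Nat.choose_self _
  have c2 : ((m+3).choose (m+2) : ℕ) = m+3 := by
    have := Nat.choose_succ_self_right (m+2)
    simpa using this
  have e1 : m+3-(m+3) = 0 := by omega
  have e2 : m+3-(m+2) = 1 := by omega
  rw [c1, c2, e1, e2]
  have heq : ∑ i ∈ Finset.range (m+2), x^i * (-θ)^(m+3-i) * (((m+3).choose i:ℕ):ℝ)
      + x^(m+2) * (-θ)^1 * ((m+3:ℕ):ℝ) + x^(m+3) * (-θ)^0 * ((1:ℕ):ℝ)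
      - x^(m+3) + ((m+3:ℕ):ℝ)*x^(m+2)*θ
      = ∑ i ∈ Finset.range (m+2), x^i * (-θ)^(m+3-i) * (((m+3).choose i:ℕ):ℝ) := by
    push_cast
    ring
  rw [heq]
  have := bin_tail (m+3) (m+2) x θ hx h0 h1
  calc |∑ i ∈ Finset.range (m+2), x^i * (-θ)^(m+3-i) * (((m+3).choose i:ℕ):ℝ)|
      ≤ 2^(m+3) * x^(m+2-1) := this
    _ = 2^(m+3) * x^(m+1) := by norm_num

lemma binB (m : ℕ) (x θ : ℝ) (hx : 1 ≤ x) (h0 : 0 ≤ θ) (h1 : θ ≤ 1) :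
    |(x - θ)^(m+2) - x^(m+2)| ≤ 2^(m+2) * x^(m+1) := by
  have hexp : (x - θ)^(m+2) = ∑ i ∈ Finset.range (m+3),
      x^i * (-θ)^(m+2-i) * (((m+2).choose i:ℕ):ℝ) := by
    have := add_pow x (-θ) (m+2)
    rw [← sub_eq_add_neg] at this
    exact_mod_cast this
  rw [hexp, Finset.sum_range_succ]
  have c1 : ((m+2).choose (m+2) : ℕ) = 1 := Nat.choose_self _
  have e1 : m+2-(m+2) = 0 := by omega
  rw [c1, e1]
  have heq : ∑ i ∈ Finset.range (m+2), x^i * (-θ)^(m+2-i) * (((m+2).choose i:ℕ):ℝ)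
      + x^(m+2) * (-θ)^0 * ((1:ℕ):ℝ) - x^(m+2)
      = ∑ i ∈ Finset.range (m+2), x^i * (-θ)^(m+2-i) * (((m+2).choose i:ℕ):ℝ) := by
    push_cast
    ring
  rw [heq]
  have := bin_tail (m+2) (m+2) x θ hx h0 h1
  calc |∑ i ∈ Finset.range (m+2), x^i * (-θ)^(m+2-i) * (((m+2).choose i:ℕ):ℝ)|
      ≤ 2^(m+2) * x^(m+2-1) := this
    _ = 2^(m+2) * x^(m+1) := by norm_num

set_option maxHeartbeats 2000000 in
theorem stmt11 (k : ℕ) (hk : 3 ≤ k) :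
    ∃ C : ℝ, 0 < C ∧
      ∀ L : ℕ, 2 ≤ L →
        |(k : ℝ) * ∑ m ∈ Finset.Icc 1 L, (jordanTotient (k - 1) m : ℝ)
            - (L : ℝ) ^ k / zetaR k
            - ((k : ℝ) / 2) * (L : ℝ) ^ (k - 1) / zetaR (k - 1)
            + (k : ℝ) * ∑ d ∈ Finset.Icc 1 L,
                (ArithmeticFunction.moebius d : ℝ) * ((L : ℝ) / (d : ℝ)) ^ (k - 1)
                  * Int.fract ((L : ℝ) / (d : ℝ))|
          ≤ C * (L : ℝ) ^ (k - 2) * Real.log L := by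
  obtain ⟨m, rfl⟩ : ∃ m, k = m + 3 := ⟨k - 3, by omega⟩
  simp only [show m + 3 - 1 = m + 2 from rfl, show m + 3 - 2 = m + 1 from rfl]
  obtain ⟨C1, hC1pos, hC1⟩ := faul_est m
  have hlog2 : 0 < Real.log 2 := Real.log_pos one_lt_two
  have hk3pos : (0:ℝ) < ((m+3:ℕ):ℝ) := by positivity
  refine ⟨(C1 + 2^(m+3) + ((m+3:ℕ):ℝ)/2 * 2^(m+2)) * (1/Real.log 2 + 1)
      + (1 + ((m+3:ℕ):ℝ)/2) * (1/Real.log 2), by positivity, ?_⟩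
  set C2 : ℝ := C1 + 2^(m+3) + ((m+3:ℕ):ℝ)/2 * 2^(m+2) with hC2def
  have hC2pos : 0 < C2 := by positivity
  intro L hL
  have hL1 : 1 ≤ L := by omega
  have hL2r : (2:ℝ) ≤ (L:ℝ) := by exact_mod_cast hL
  have hLpos : (0:ℝ) < (L:ℝ) := by linarith
  have hlogL : Real.log 2 ≤ Real.log L := Real.log_le_log (by norm_num) hL2r
  have hlogLpos : 0 < Real.log L := lt_of_lt_of_le hlog2 hlogL
  -- Step A: divisor swap
  have hswap : ((m+3:ℕ):ℝ) * ∑ m' ∈ Finset.Icc 1 L, (jordanTotient (m+2) m' : ℝ)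
      = ∑ d ∈ Finset.Icc 1 L, (moebius d : ℝ)
          * (((m+3:ℕ):ℝ) * ∑ e ∈ Finset.Icc 1 (L/d), (e:ℝ)^(m+2)) := by
    have h1 : ∀ m' : ℕ, (jordanTotient (m+2) m' : ℝ)
        = ∑ p ∈ m'.divisorsAntidiagonal, (moebius p.1 : ℝ) * (p.2:ℝ)^(m+2) := by
      intro m'
      rw [jordanTotient]
      rw [Int.cast_sum]
      simp only [Int.cast_mul, Int.cast_pow, Int.cast_natCast]
      rw [← Nat.sum_divisorsAntidiagonal (f := fun a b => (moebius a : ℝ) * (b:ℝ)^(m+2))]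
    rw [Finset.sum_congr rfl (fun m' _ => h1 m'),
      swap_lemma L (fun a b => (moebius a : ℝ) * (b:ℝ)^(m+2)), Finset.mul_sum]
    apply Finset.sum_congr rfl
    intro d _
    rw [← Finset.mul_sum]
    ring
  -- Step B/C: pointwise estimate
  have hstep : ∀ d ∈ Finset.Icc 1 L,
      |((m+3:ℕ):ℝ) * ∑ e ∈ Finset.Icc 1 (L/d), (e:ℝ)^(m+2)
        - (((L:ℝ)/(d:ℝ))^(m+3)
           - ((m+3:ℕ):ℝ) * ((L:ℝ)/(d:ℝ))^(m+2) * Int.fract ((L:ℝ)/(d:ℝ))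
           + ((m+3:ℕ):ℝ)/2 * ((L:ℝ)/(d:ℝ))^(m+2))|
        ≤ C2 * ((L:ℝ)/(d:ℝ))^(m+1) := by
    intro d hd
    simp only [Finset.mem_Icc] at hd
    obtain ⟨hd1, hd2⟩ := hd
    have hdr : (1:ℝ) ≤ (d:ℝ) := by exact_mod_cast hd1
    have hdpos : (0:ℝ) < (d:ℝ) := by linarith
    set N := L / d with hNdef
    set x := (L:ℝ)/(d:ℝ) with hxdef
    set θ := Int.fract x with hθdef
    have hLd : (d:ℝ) ≤ (L:ℝ) := by exact_mod_cast hd2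
    have hx1 : 1 ≤ x := by
      rw [hxdef, le_div_iff₀ hdpos]
      linarith
    have hN1 : 1 ≤ N := (Nat.one_le_div_iff (by omega)).mpr hd2
    have hfl : ((⌊x⌋ : ℤ) : ℝ) = (N:ℝ) := by
      have h1 : ⌊x⌋ = (N : ℤ) := by
        rw [Int.floor_eq_iff]
        constructor
        · rw [hxdef, le_div_iff₀ hdpos]
          push_cast
          exact_mod_cast Nat.cast_le.mpr (Nat.div_mul_le_self L d)
        · rw [hxdef, div_lt_iff₀ hdpos]
          have hmod : d * N + L % d = L := by rw [hNdef]; exact Nat.div_add_mod L d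
          have hmlt : L % d < d := Nat.mod_lt L (by omega)
          have hup : L < d * (N + 1) := by
            rw [Nat.mul_succ]
            omega
          push_cast
          calc (L:ℝ) < (d:ℝ) * ((N:ℝ) + 1) := by exact_mod_cast hup
            _ = ((N:ℝ) + 1) * (d:ℝ) := by ring
      rw [h1]
      push_cast
      ring
    have hθ0 : 0 ≤ θ := Int.fract_nonneg x
    have hθ1 : θ ≤ 1 := (Int.fract_lt_one x).le
    have hNx : (N:ℝ) = x - θ := by
      rw [hθdef, Int.fract]
      rw [← hfl]
      ring
    have hNlex : (N:ℝ) ≤ x := by rw [hNx]; linarith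
    have hNnonneg : (0:ℝ) ≤ (N:ℝ) := Nat.cast_nonneg N
    have hfa := hC1 N hN1
    rw [hNx] at hfa
    have hbA := binA m x θ hx1 hθ0 hθ1
    have hbB := binB m x θ hx1 hθ0 hθ1
    have hxm1 : (x - θ)^(m+1) ≤ x^(m+1) := by
      apply pow_le_pow_left₀ (by rw [← hNx]; exact hNnonneg)
      linarith
    have hdecomp : ((m+3:ℕ):ℝ) * ∑ e ∈ Finset.Icc 1 N, (e:ℝ)^(m+2)
        - (x^(m+3) - ((m+3:ℕ):ℝ) * x^(m+2) * θ + ((m+3:ℕ):ℝ)/2 * x^(m+2))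
        = (((m+3:ℕ):ℝ) * ∑ e ∈ Finset.Icc 1 N, (e:ℝ)^(m+2)
            - (x - θ)^(m+3) - ((m+3:ℕ):ℝ)/2 * (x - θ)^(m+2))
          + ((x - θ)^(m+3) - x^(m+3) + ((m+3:ℕ):ℝ) * x^(m+2) * θ)
          + ((m+3:ℕ):ℝ)/2 * ((x - θ)^(m+2) - x^(m+2)) := by
      ring
    rw [hdecomp]
    have habs1 : |((m+3:ℕ):ℝ)/2 * ((x - θ)^(m+2) - x^(m+2))|
        ≤ ((m+3:ℕ):ℝ)/2 * (2^(m+2) * x^(m+1)) := by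
      rw [abs_mul, abs_of_nonneg (by positivity : (0:ℝ) ≤ ((m+3:ℕ):ℝ)/2)]
      exact mul_le_mul_of_nonneg_left hbB (by positivity)
    have hfa2 : |((m+3:ℕ):ℝ) * ∑ e ∈ Finset.Icc 1 N, (e:ℝ)^(m+2)
        - (x - θ)^(m+3) - ((m+3:ℕ):ℝ)/2 * (x - θ)^(m+2)| ≤ C1 * x^(m+1) := by
      calc |((m+3:ℕ):ℝ) * ∑ e ∈ Finset.Icc 1 N, (e:ℝ)^(m+2)
          - (x - θ)^(m+3) - ((m+3:ℕ):ℝ)/2 * (x - θ)^(m+2)| ≤ C1 * (x - θ)^(m+1) := hfa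
        _ ≤ C1 * x^(m+1) := mul_le_mul_of_nonneg_left hxm1 hC1pos.le
    calc |(((m+3:ℕ):ℝ) * ∑ e ∈ Finset.Icc 1 N, (e:ℝ)^(m+2)
            - (x - θ)^(m+3) - ((m+3:ℕ):ℝ)/2 * (x - θ)^(m+2))
          + ((x - θ)^(m+3) - x^(m+3) + ((m+3:ℕ):ℝ) * x^(m+2) * θ)
          + ((m+3:ℕ):ℝ)/2 * ((x - θ)^(m+2) - x^(m+2))|
        ≤ |(((m+3:ℕ):ℝ) * ∑ e ∈ Finset.Icc 1 N, (e:ℝ)^(m+2)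
            - (x - θ)^(m+3) - ((m+3:ℕ):ℝ)/2 * (x - θ)^(m+2))
          + ((x - θ)^(m+3) - x^(m+3) + ((m+3:ℕ):ℝ) * x^(m+2) * θ)|
          + |((m+3:ℕ):ℝ)/2 * ((x - θ)^(m+2) - x^(m+2))| := abs_add_le _ _
      _ ≤ |((m+3:ℕ):ℝ) * ∑ e ∈ Finset.Icc 1 N, (e:ℝ)^(m+2)
            - (x - θ)^(m+3) - ((m+3:ℕ):ℝ)/2 * (x - θ)^(m+2)|
          + |(x - θ)^(m+3) - x^(m+3) + ((m+3:ℕ):ℝ) * x^(m+2) * θ|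
          + |((m+3:ℕ):ℝ)/2 * ((x - θ)^(m+2) - x^(m+2))| := by
          have := abs_add_le (((m+3:ℕ):ℝ) * ∑ e ∈ Finset.Icc 1 N, (e:ℝ)^(m+2)
            - (x - θ)^(m+3) - ((m+3:ℕ):ℝ)/2 * (x - θ)^(m+2))
            ((x - θ)^(m+3) - x^(m+3) + ((m+3:ℕ):ℝ) * x^(m+2) * θ)
          linarith
      _ ≤ C1 * x^(m+1) + 2^(m+3) * x^(m+1) + ((m+3:ℕ):ℝ)/2 * (2^(m+2) * x^(m+1)) := by
          have h2 : |(x - θ)^(m+3) - x^(m+3) + ((m+3:ℕ):ℝ) * x^(m+2) * θ|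
              ≤ 2^(m+3) * x^(m+1) := hbA
          linarith [hfa2, habs1]
      _ = C2 * x^(m+1) := by rw [hC2def]; ring
  -- harmonic-type bound
  have hxsum : ∑ d ∈ Finset.Icc 1 L, ((L:ℝ)/(d:ℝ))^(m+1)
      ≤ (L:ℝ)^(m+1) * (1 + Real.log L) := by
    have h1 : ∑ d ∈ Finset.Icc 1 L, ((L:ℝ)/(d:ℝ))^(m+1)
        = (L:ℝ)^(m+1) * ∑ d ∈ Finset.Icc 1 L, 1/(d:ℝ)^(m+1) := by
      rw [Finset.mul_sum]
      apply Finset.sum_congr rfl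
      intro d _
      rw [div_pow]
      ring
    rw [h1]
    apply mul_le_mul_of_nonneg_left _ (by positivity)
    calc ∑ d ∈ Finset.Icc 1 L, 1/(d:ℝ)^(m+1) ≤ ∑ d ∈ Finset.Icc 1 L, 1/(d:ℝ) := by
          apply Finset.sum_le_sum
          intro d hd
          simp only [Finset.mem_Icc] at hd
          have hd1 : (1:ℝ) ≤ (d:ℝ) := by exact_mod_cast hd.1
          exact one_div_le_one_div_of_le (by linarith) (le_self_pow₀ hd1 (by omega))
      _ = ((harmonic L : ℚ) : ℝ) := by
          rw [harmonic_eq_sum_Icc]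
          push_cast
          apply Finset.sum_congr rfl
          intro d _
          rw [one_div]
      _ ≤ 1 + Real.log L := harmonic_le_one_add_log L
  -- partial sums of mu vs 1/zeta
  have hSk : |1/zetaR (m+3) - ∑ d ∈ Finset.Icc 1 L, (moebius d:ℝ)/(d:ℝ)^(m+3)|
      ≤ 1/(L:ℝ)^2 := by
    obtain ⟨hsum3, hb3⟩ := tail3 L hL1
    apply mu_partial_le (m+3) (by omega) L _ _ hsum3 hb3
    intro n
    have hbase : (1:ℝ) ≤ (n:ℝ)+L+1 := by
      have := Nat.cast_nonneg (α := ℝ) n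
      linarith
    exact one_div_le_one_div_of_le (by positivity)
      (pow_le_pow_right₀ hbase (by omega))
  have hSk1 : |1/zetaR (m+2) - ∑ d ∈ Finset.Icc 1 L, (moebius d:ℝ)/(d:ℝ)^(m+2)|
      ≤ 1/(L:ℝ) := by
    obtain ⟨hsum2, hb2⟩ := tail2 L hL1
    apply mu_partial_le (m+2) (by omega) L _ _ hsum2 hb2
    intro n
    have hbase : (1:ℝ) ≤ (n:ℝ)+L+1 := by
      have := Nat.cast_nonneg (α := ℝ) n
      linarith
    exact one_div_le_one_div_of_le (by positivity)
      (pow_le_pow_right₀ hbase (by omega))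
  -- power sum extraction
  have hxpow : ∀ s : ℕ, ∑ d ∈ Finset.Icc 1 L, (moebius d:ℝ) * ((L:ℝ)/(d:ℝ))^s
      = (L:ℝ)^s * ∑ d ∈ Finset.Icc 1 L, (moebius d:ℝ)/(d:ℝ)^s := by
    intro s
    rw [Finset.mul_sum]
    apply Finset.sum_congr rfl
    intro d _
    rw [div_pow]
    ring
  -- regrouping identity
  have hF : ∑ d ∈ Finset.Icc 1 L, (moebius d:ℝ)
        * (((L:ℝ)/(d:ℝ))^(m+3)
           - ((m+3:ℕ):ℝ) * ((L:ℝ)/(d:ℝ))^(m+2) * Int.fract ((L:ℝ)/(d:ℝ))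
           + ((m+3:ℕ):ℝ)/2 * ((L:ℝ)/(d:ℝ))^(m+2))
      = (L:ℝ)^(m+3) * (∑ d ∈ Finset.Icc 1 L, (moebius d:ℝ)/(d:ℝ)^(m+3))
        - ((m+3:ℕ):ℝ) * ∑ d ∈ Finset.Icc 1 L,
            (moebius d:ℝ) * ((L:ℝ)/(d:ℝ))^(m+2) * Int.fract ((L:ℝ)/(d:ℝ))
        + ((m+3:ℕ):ℝ)/2
          * ((L:ℝ)^(m+2) * ∑ d ∈ Finset.Icc 1 L, (moebius d:ℝ)/(d:ℝ)^(m+2)) := by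
    have hsplit : ∀ d ∈ Finset.Icc 1 L, (moebius d:ℝ)
        * (((L:ℝ)/(d:ℝ))^(m+3)
           - ((m+3:ℕ):ℝ) * ((L:ℝ)/(d:ℝ))^(m+2) * Int.fract ((L:ℝ)/(d:ℝ))
           + ((m+3:ℕ):ℝ)/2 * ((L:ℝ)/(d:ℝ))^(m+2))
        = (moebius d:ℝ) * ((L:ℝ)/(d:ℝ))^(m+3)
          - ((m+3:ℕ):ℝ) * ((moebius d:ℝ) * ((L:ℝ)/(d:ℝ))^(m+2) * Int.fract ((L:ℝ)/(d:ℝ)))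
          + ((m+3:ℕ):ℝ)/2 * ((moebius d:ℝ) * ((L:ℝ)/(d:ℝ))^(m+2)) := by
      intro d _
      ring
    rw [Finset.sum_congr rfl hsplit, Finset.sum_add_distrib, Finset.sum_sub_distrib,
      ← Finset.mul_sum, ← Finset.mul_sum, hxpow (m+3), hxpow (m+2)]
  -- final assembly
  have hsub : (∑ d ∈ Finset.Icc 1 L, (moebius d:ℝ)
            * ((((m+3:ℕ):ℝ) * ∑ e ∈ Finset.Icc 1 (L/d), (e:ℝ)^(m+2))
              - (((L:ℝ)/(d:ℝ))^(m+3)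
                 - ((m+3:ℕ):ℝ) * ((L:ℝ)/(d:ℝ))^(m+2) * Int.fract ((L:ℝ)/(d:ℝ))
                 + ((m+3:ℕ):ℝ)/2 * ((L:ℝ)/(d:ℝ))^(m+2))))
      = (∑ d ∈ Finset.Icc 1 L, (moebius d:ℝ)
          * (((m+3:ℕ):ℝ) * ∑ e ∈ Finset.Icc 1 (L/d), (e:ℝ)^(m+2)))
        - (∑ d ∈ Finset.Icc 1 L, (moebius d:ℝ)
        * (((L:ℝ)/(d:ℝ))^(m+3)
           - ((m+3:ℕ):ℝ) * ((L:ℝ)/(d:ℝ))^(m+2) * Int.fract ((L:ℝ)/(d:ℝ))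
           + ((m+3:ℕ):ℝ)/2 * ((L:ℝ)/(d:ℝ))^(m+2))) := by
    rw [← Finset.sum_sub_distrib]
    exact Finset.sum_congr rfl (fun d _ => by ring)
  have hkey : ((m+3:ℕ):ℝ) * ∑ m' ∈ Finset.Icc 1 L, (jordanTotient (m+2) m' : ℝ)
        - (L:ℝ)^(m+3) / zetaR (m+3)
        - ((m+3:ℕ):ℝ)/2 * (L:ℝ)^(m+2) / zetaR (m+2)
        + ((m+3:ℕ):ℝ) * ∑ d ∈ Finset.Icc 1 L,
            (moebius d:ℝ) * ((L:ℝ)/(d:ℝ))^(m+2) * Int.fract ((L:ℝ)/(d:ℝ))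
      = (∑ d ∈ Finset.Icc 1 L, (moebius d:ℝ)
            * ((((m+3:ℕ):ℝ) * ∑ e ∈ Finset.Icc 1 (L/d), (e:ℝ)^(m+2))
              - (((L:ℝ)/(d:ℝ))^(m+3)
                 - ((m+3:ℕ):ℝ) * ((L:ℝ)/(d:ℝ))^(m+2) * Int.fract ((L:ℝ)/(d:ℝ))
                 + ((m+3:ℕ):ℝ)/2 * ((L:ℝ)/(d:ℝ))^(m+2))))
        + (L:ℝ)^(m+3) * ((∑ d ∈ Finset.Icc 1 L, (moebius d:ℝ)/(d:ℝ)^(m+3))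
            - 1/zetaR (m+3))
        + ((m+3:ℕ):ℝ)/2 * ((L:ℝ)^(m+2)
            * ((∑ d ∈ Finset.Icc 1 L, (moebius d:ℝ)/(d:ℝ)^(m+2)) - 1/zetaR (m+2))) := by
    rw [hsub, hF, hswap]
    ring
  rw [hkey]
  -- bound the three pieces
  have hb1 : |∑ d ∈ Finset.Icc 1 L, (moebius d:ℝ)
        * ((((m+3:ℕ):ℝ) * ∑ e ∈ Finset.Icc 1 (L/d), (e:ℝ)^(m+2))
          - (((L:ℝ)/(d:ℝ))^(m+3)
             - ((m+3:ℕ):ℝ) * ((L:ℝ)/(d:ℝ))^(m+2) * Int.fract ((L:ℝ)/(d:ℝ))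
             + ((m+3:ℕ):ℝ)/2 * ((L:ℝ)/(d:ℝ))^(m+2)))|
      ≤ C2 * ((L:ℝ)^(m+1) * (1 + Real.log L)) := by
    calc |∑ d ∈ Finset.Icc 1 L, (moebius d:ℝ)
          * ((((m+3:ℕ):ℝ) * ∑ e ∈ Finset.Icc 1 (L/d), (e:ℝ)^(m+2))
            - (((L:ℝ)/(d:ℝ))^(m+3)
               - ((m+3:ℕ):ℝ) * ((L:ℝ)/(d:ℝ))^(m+2) * Int.fract ((L:ℝ)/(d:ℝ))
               + ((m+3:ℕ):ℝ)/2 * ((L:ℝ)/(d:ℝ))^(m+2)))|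
        ≤ ∑ d ∈ Finset.Icc 1 L, |(moebius d:ℝ)
          * ((((m+3:ℕ):ℝ) * ∑ e ∈ Finset.Icc 1 (L/d), (e:ℝ)^(m+2))
            - (((L:ℝ)/(d:ℝ))^(m+3)
               - ((m+3:ℕ):ℝ) * ((L:ℝ)/(d:ℝ))^(m+2) * Int.fract ((L:ℝ)/(d:ℝ))
               + ((m+3:ℕ):ℝ)/2 * ((L:ℝ)/(d:ℝ))^(m+2)))| :=
          Finset.abs_sum_le_sum_abs _ _
      _ ≤ ∑ d ∈ Finset.Icc 1 L, C2 * ((L:ℝ)/(d:ℝ))^(m+1) := by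
          apply Finset.sum_le_sum
          intro d hd
          rw [abs_mul]
          have hmu : |(moebius d:ℝ)| ≤ 1 := by
            have := ArithmeticFunction.abs_moebius_le_one (n := d)
            exact_mod_cast this
          have hst := hstep d hd
          calc |(moebius d:ℝ)| * |(((m+3:ℕ):ℝ) * ∑ e ∈ Finset.Icc 1 (L/d), (e:ℝ)^(m+2))
              - (((L:ℝ)/(d:ℝ))^(m+3)
                 - ((m+3:ℕ):ℝ) * ((L:ℝ)/(d:ℝ))^(m+2) * Int.fract ((L:ℝ)/(d:ℝ))
                 + ((m+3:ℕ):ℝ)/2 * ((L:ℝ)/(d:ℝ))^(m+2))|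
              ≤ 1 * (C2 * ((L:ℝ)/(d:ℝ))^(m+1)) := by
                apply mul_le_mul hmu hst (abs_nonneg _) one_pos.le
            _ = C2 * ((L:ℝ)/(d:ℝ))^(m+1) := one_mul _
      _ = C2 * ∑ d ∈ Finset.Icc 1 L, ((L:ℝ)/(d:ℝ))^(m+1) := by rw [Finset.mul_sum]
      _ ≤ C2 * ((L:ℝ)^(m+1) * (1 + Real.log L)) :=
          mul_le_mul_of_nonneg_left hxsum hC2pos.le
  have hb2 : |(L:ℝ)^(m+3) * ((∑ d ∈ Finset.Icc 1 L, (moebius d:ℝ)/(d:ℝ)^(m+3))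
        - 1/zetaR (m+3))| ≤ (L:ℝ)^(m+1) := by
    rw [abs_mul, abs_of_nonneg (by positivity : (0:ℝ) ≤ (L:ℝ)^(m+3)), abs_sub_comm]
    calc (L:ℝ)^(m+3) * |1/zetaR (m+3)
          - ∑ d ∈ Finset.Icc 1 L, (moebius d:ℝ)/(d:ℝ)^(m+3)|
        ≤ (L:ℝ)^(m+3) * (1/(L:ℝ)^2) := mul_le_mul_of_nonneg_left hSk (by positivity)
      _ = (L:ℝ)^(m+1) := by
          field_simp
          ring
  have hb3 : |((m+3:ℕ):ℝ)/2 * ((L:ℝ)^(m+2)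
        * ((∑ d ∈ Finset.Icc 1 L, (moebius d:ℝ)/(d:ℝ)^(m+2)) - 1/zetaR (m+2)))|
      ≤ ((m+3:ℕ):ℝ)/2 * (L:ℝ)^(m+1) := by
    rw [abs_mul, abs_mul, abs_of_nonneg (by positivity : (0:ℝ) ≤ ((m+3:ℕ):ℝ)/2),
      abs_of_nonneg (by positivity : (0:ℝ) ≤ (L:ℝ)^(m+2)), abs_sub_comm]
    calc ((m+3:ℕ):ℝ)/2 * ((L:ℝ)^(m+2) * |1/zetaR (m+2)
          - ∑ d ∈ Finset.Icc 1 L, (moebius d:ℝ)/(d:ℝ)^(m+2)|)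
        ≤ ((m+3:ℕ):ℝ)/2 * ((L:ℝ)^(m+2) * (1/(L:ℝ))) := by
          apply mul_le_mul_of_nonneg_left _ (by positivity)
          exact mul_le_mul_of_nonneg_left hSk1 (by positivity)
      _ = ((m+3:ℕ):ℝ)/2 * (L:ℝ)^(m+1) := by
          field_simp
          ring
  have htri : ∀ a b c : ℝ, |a + b + c| ≤ |a| + |b| + |c| := by
    intro a b c
    calc |a + b + c| ≤ |a + b| + |c| := abs_add_le _ _
      _ ≤ |a| + |b| + |c| := by linarith [abs_add_le a b]
  calc |(∑ d ∈ Finset.Icc 1 L, (moebius d:ℝ)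
            * ((((m+3:ℕ):ℝ) * ∑ e ∈ Finset.Icc 1 (L/d), (e:ℝ)^(m+2))
              - (((L:ℝ)/(d:ℝ))^(m+3)
                 - ((m+3:ℕ):ℝ) * ((L:ℝ)/(d:ℝ))^(m+2) * Int.fract ((L:ℝ)/(d:ℝ))
                 + ((m+3:ℕ):ℝ)/2 * ((L:ℝ)/(d:ℝ))^(m+2))))
        + (L:ℝ)^(m+3) * ((∑ d ∈ Finset.Icc 1 L, (moebius d:ℝ)/(d:ℝ)^(m+3))
            - 1/zetaR (m+3))
        + ((m+3:ℕ):ℝ)/2 * ((L:ℝ)^(m+2)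
            * ((∑ d ∈ Finset.Icc 1 L, (moebius d:ℝ)/(d:ℝ)^(m+2)) - 1/zetaR (m+2)))|
      ≤ C2 * ((L:ℝ)^(m+1) * (1 + Real.log L)) + (L:ℝ)^(m+1)
          + ((m+3:ℕ):ℝ)/2 * (L:ℝ)^(m+1) := by
        have := htri (∑ d ∈ Finset.Icc 1 L, (moebius d:ℝ)
            * ((((m+3:ℕ):ℝ) * ∑ e ∈ Finset.Icc 1 (L/d), (e:ℝ)^(m+2))
              - (((L:ℝ)/(d:ℝ))^(m+3)
                 - ((m+3:ℕ):ℝ) * ((L:ℝ)/(d:ℝ))^(m+2) * Int.fract ((L:ℝ)/(d:ℝ))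
                 + ((m+3:ℕ):ℝ)/2 * ((L:ℝ)/(d:ℝ))^(m+2))))
          ((L:ℝ)^(m+3) * ((∑ d ∈ Finset.Icc 1 L, (moebius d:ℝ)/(d:ℝ)^(m+3))
            - 1/zetaR (m+3)))
          (((m+3:ℕ):ℝ)/2 * ((L:ℝ)^(m+2)
            * ((∑ d ∈ Finset.Icc 1 L, (moebius d:ℝ)/(d:ℝ)^(m+2)) - 1/zetaR (m+2))))
        linarith [hb1, hb2, hb3]
    _ ≤ (C2 * (1/Real.log 2 + 1) + (1 + ((m+3:ℕ):ℝ)/2) * (1/Real.log 2))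
          * (L:ℝ)^(m+1) * Real.log L := by
        have hLpow : (0:ℝ) < (L:ℝ)^(m+1) := by positivity
        have h1le : 1 ≤ Real.log L / Real.log 2 := by
          rw [le_div_iff₀ hlog2]
          linarith
        have e1 : 1 + Real.log L ≤ (1/Real.log 2 + 1) * Real.log L := by
          have : (1/Real.log 2 + 1) * Real.log L
              = Real.log L / Real.log 2 + Real.log L := by ring
          rw [this]
          nlinarith
        have e2 : (1 + ((m+3:ℕ):ℝ)/2) * (L:ℝ)^(m+1)
            ≤ (1 + ((m+3:ℕ):ℝ)/2) * (1/Real.log 2) * ((L:ℝ)^(m+1) * Real.log L) := by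
          have h3 : (1 + ((m+3:ℕ):ℝ)/2) * (1/Real.log 2) * ((L:ℝ)^(m+1) * Real.log L)
              = (1 + ((m+3:ℕ):ℝ)/2) * ((L:ℝ)^(m+1) * (Real.log L / Real.log 2)) := by
            ring
          rw [h3]
          apply mul_le_mul_of_nonneg_left _ (by positivity)
          nlinarith
        have e3 : C2 * ((L:ℝ)^(m+1) * (1 + Real.log L))
            ≤ C2 * (1/Real.log 2 + 1) * ((L:ℝ)^(m+1) * Real.log L) := by
          have h4 : C2 * (1/Real.log 2 + 1) * ((L:ℝ)^(m+1) * Real.log L)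
              = C2 * ((L:ℝ)^(m+1) * ((1/Real.log 2 + 1) * Real.log L)) := by ring
          rw [h4]
          apply mul_le_mul_of_nonneg_left _ hC2pos.le
          apply mul_le_mul_of_nonneg_left e1 hLpow.le
        nlinarith [e2, e3]
end

section
/- Let k ≥ 3, let V_k = {x ∈ ℕ^k : gcd(x₁,…,x_k) = 1}, and for a positive integer L define M(L) = ∑_{d=1}^{L} (μ(d)/d^{k−1})·{L/d}, where {L/d} = L/d − ⌊L/d⌋. Then there exists a constant C > 0 such that for all integers L ≥ 2, | |V_k ∩ [1,L]^k| − L^k/ζ(k) + k·M(L)·L^{k−1} | ≤ C · L^{k−2} log L. -/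
/-- `M(L) = ∑_{d=1}^{L} (μ(d)/d^{k-1}) {L/d}`. -/
noncomputable def MFun (k L : ℕ) : ℝ :=
  ∑ d ∈ Finset.Icc 1 L,
    (ArithmeticFunction.moebius d : ℝ) / (d : ℝ) ^ (k - 1)
      * Int.fract ((L : ℝ) / (d : ℝ))

open Finset ArithmeticFunction
open scoped ArithmeticFunction.Moebius ArithmeticFunction.zeta

section Aux

lemma count_mult (L d : ℕ) :
    ((Finset.Icc 1 L).filter (fun n => d ∣ n)).card = L / d := by
  rw [show Finset.Icc 1 L = Finset.Ioc 0 L from by rw [← Finset.Icc_add_one_left_eq_Ioc]; rfl]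
  exact Nat.Ioc_filter_dvd_card_eq_div L d

lemma count_box (k L d : ℕ) :
    ((Fintype.piFinset fun _ : Fin k => Finset.Icc 1 L).filter
      (fun x => ∀ i, d ∣ x i)).card = (L / d) ^ k := by
  classical
  have h : ((Fintype.piFinset fun _ : Fin k => Finset.Icc 1 L).filter
      (fun x => ∀ i, d ∣ x i))
      = Fintype.piFinset (fun _ : Fin k => (Finset.Icc 1 L).filter (fun n => d ∣ n)) := by
    ext x
    simp [Fintype.mem_piFinset, Finset.mem_filter, forall_and]
  rw [h, Fintype.card_piFinset]
  simp [count_mult]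

lemma moebius_sum_divisors (g : ℕ) :
    ∑ d ∈ g.divisors, (μ d : ℤ) = if g = 1 then 1 else 0 := by
  have h : (μ * (ζ : ArithmeticFunction ℤ)) g = (1 : ArithmeticFunction ℤ) g := by
    rw [moebius_mul_coe_zeta]
  rwa [coe_mul_zeta_apply, one_apply] at h

lemma visCount_eq (k L : ℕ) (hk : 1 ≤ k) :
    (visCount k L : ℤ) = ∑ d ∈ Finset.Icc 1 L, (μ d) * ((L / d : ℕ) : ℤ) ^ k := by
  classical
  have key : ∀ x ∈ (Fintype.piFinset fun _ : Fin k => Finset.Icc 1 L),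
      (if Finset.univ.gcd x = 1 then (1:ℤ) else 0)
        = ∑ d ∈ Finset.Icc 1 L, if d ∣ Finset.univ.gcd x then (μ d : ℤ) else 0 := by
    intro x hx
    rw [Fintype.mem_piFinset] at hx
    set g := Finset.univ.gcd x with hg
    let i0 : Fin k := ⟨0, by omega⟩
    have hx0 := hx i0
    rw [Finset.mem_Icc] at hx0
    have hdvd : g ∣ x i0 := Finset.gcd_dvd (Finset.mem_univ i0)
    have hgne : g ≠ 0 := by
      intro h0
      rw [h0] at hdvd
      have := Nat.eq_zero_of_zero_dvd hdvd
      omega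
    have hgL : g ≤ L := le_trans (Nat.le_of_dvd (by omega) hdvd) hx0.2
    have hset : (Finset.Icc 1 L).filter (fun d => d ∣ g) = g.divisors := by
      ext d
      simp only [Finset.mem_filter, Finset.mem_Icc, Nat.mem_divisors]
      constructor
      · rintro ⟨_, hd⟩; exact ⟨hd, hgne⟩
      · rintro ⟨hd, _⟩
        have hd0 : d ≠ 0 := by
          intro h0; rw [h0] at hd; exact hgne (Nat.eq_zero_of_zero_dvd hd)
        exact ⟨⟨by omega, le_trans (Nat.le_of_dvd (Nat.pos_of_ne_zero hgne) hd) hgL⟩, hd⟩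
    rw [← Finset.sum_filter, hset, moebius_sum_divisors]
  rw [visCount, Finset.card_filter]
  push_cast
  rw [Finset.sum_congr rfl key, Finset.sum_comm]
  refine Finset.sum_congr rfl fun d _ => ?_
  have : ∀ x : Fin k → ℕ, (d ∣ Finset.univ.gcd x) ↔ (∀ i, d ∣ x i) := by
    intro x
    rw [Finset.dvd_gcd_iff]
    simp
  calc ∑ x ∈ (Fintype.piFinset fun _ : Fin k => Finset.Icc 1 L),
        (if d ∣ Finset.univ.gcd x then (μ d : ℤ) else 0)
      = ∑ x ∈ ((Fintype.piFinset fun _ : Fin k => Finset.Icc 1 L)).filter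
          (fun x => ∀ i, d ∣ x i), (μ d : ℤ) := by
        rw [Finset.sum_filter]
        exact Finset.sum_congr rfl fun x _ => by rw [if_congr (this x) rfl rfl]
    _ = (μ d : ℤ) * ((L / d : ℕ) : ℤ) ^ k := by
        rw [Finset.sum_const, count_box, nsmul_eq_mul]
        push_cast
        ring

lemma pow_expand_bound (k : ℕ) (hk : 3 ≤ k) {a b : ℝ} (ha : 1 ≤ a) (hb0 : 0 ≤ b)
    (hb1 : b ≤ 1) :
    |(a - b) ^ k - a ^ k + (k : ℝ) * a ^ (k - 1) * b| ≤ 2 ^ k * a ^ (k - 2) := by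
  obtain ⟨r, rfl⟩ : ∃ r, k = r + 2 := ⟨k - 2, by omega⟩
  have ha0 : (0:ℝ) ≤ a := by linarith
  rw [sub_pow]
  rw [show r + 2 + 1 = (r + 1) + 1 + 1 from rfl, Finset.sum_range_succ, Finset.sum_range_succ]
  have h1 : (-1 : ℝ) ^ (r + 1 + (r + 2)) = -1 := by
    rw [show r + 1 + (r + 2) = 2 * (r + 1) + 1 from by ring, pow_add, pow_mul]
    norm_num
  have h2 : (-1 : ℝ) ^ (r + 1 + 1 + (r + 2)) = 1 := by
    rw [show r + 1 + 1 + (r + 2) = 2 * (r + 2) from by ring, pow_mul]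
    norm_num
  rw [h1, h2]
  simp only [Nat.choose_self, Nat.choose_succ_self_right, Nat.sub_self, pow_zero,
    Nat.add_sub_cancel_left, Nat.cast_one, mul_one, one_mul]
  have hsimp : ∀ x : ℝ, x + (-1 * a ^ (r+1) * b ^ (r + 2 - (r+1)) * (↑(r + 1 + 1) : ℝ)) + a ^ (r + 2)
      - a ^ (r + 2) + (↑(r + 2) : ℝ) * a ^ (r + 2 - 1) * b = x := by
    intro x
    have : r + 2 - (r + 1) = 1 := by omega
    rw [this]
    have : r + 2 - 1 = r + 1 := by omega
    rw [this]
    push_cast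
    ring
  rw [hsimp]
  calc |∑ m ∈ Finset.range (r + 1),
        (-1:ℝ) ^ (m + (r + 2)) * a ^ m * b ^ (r + 2 - m) * ((r+2).choose m)|
      ≤ ∑ m ∈ Finset.range (r + 1),
        |(-1:ℝ) ^ (m + (r + 2)) * a ^ m * b ^ (r + 2 - m) * ((r+2).choose m)| :=
        Finset.abs_sum_le_sum_abs _ _
    _ ≤ ∑ m ∈ Finset.range (r + 1), a ^ r * ((r+2).choose m) := by
        refine Finset.sum_le_sum fun m hm => ?_
        rw [Finset.mem_range] at hm
        rw [abs_mul, abs_mul, abs_mul, abs_pow, abs_neg, abs_one, one_pow, one_mul,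
          abs_pow, abs_of_nonneg ha0, abs_pow, abs_of_nonneg hb0, Nat.abs_cast]
        have hb : b ^ (r + 2 - m) ≤ 1 := pow_le_one₀ hb0 hb1
        have haa : a ^ m ≤ a ^ r := pow_le_pow_right₀ ha (by omega)
        calc a ^ m * b ^ (r + 2 - m) * ((r+2).choose m : ℝ)
            ≤ a ^ r * 1 * ((r+2).choose m : ℝ) := by
              apply mul_le_mul_of_nonneg_right _ (Nat.cast_nonneg _)
              exact mul_le_mul haa hb (pow_nonneg hb0 _) (pow_nonneg ha0 _)
          _ = a ^ r * ((r+2).choose m : ℝ) := by ring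
    _ = a ^ r * ∑ m ∈ Finset.range (r + 1), ((r+2).choose m : ℝ) := by
        rw [Finset.mul_sum]
    _ ≤ a ^ r * 2 ^ (r + 2) := by
        apply mul_le_mul_of_nonneg_left _ (pow_nonneg ha0 _)
        have h3 : ∑ m ∈ Finset.range (r + 1), ((r+2).choose m : ℝ)
            ≤ ∑ m ∈ Finset.range (r + 2 + 1), ((r+2).choose m : ℝ) := by
          apply Finset.sum_le_sum_of_subset_of_nonneg
          · exact Finset.range_subset_range.2 (by omega)
          · intros; positivity
        refine h3.trans ?_
        rw [← Nat.cast_sum]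
        rw [Nat.sum_range_choose]
        push_cast
        exact le_rfl
    _ = 2 ^ (r + 2) * a ^ (r + 2 - 2) := by
        rw [show r + 2 - 2 = r from rfl]; ring

open scoped LSeries.notation in
lemma zeta_moebius_real (k : ℕ) (hk : 2 ≤ k) :
    (∑' n : ℕ, 1 / (n : ℝ) ^ k) * (∑' d : ℕ, (μ d : ℝ) / (d : ℝ) ^ k) = 1 := by
  have hk0 : k ≠ 0 := by omega
  have hs : 1 < ((k : ℂ)).re := by
    rw [Complex.natCast_re]
    exact_mod_cast (by omega : 1 < k)
  have h := LSeries_zeta_mul_Lseries_moebius (s := (k : ℂ)) hs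
  have hz : LSeries (↗(ζ : ArithmeticFunction ℕ)) (k : ℂ)
      = ((∑' n : ℕ, 1 / (n : ℝ) ^ k : ℝ) : ℂ) := by
    rw [Complex.ofReal_tsum]
    refine tsum_congr fun n => ?_
    rcases eq_or_ne n 0 with rfl | hn
    · simp [LSeries.term_zero, zero_pow hk0]
    · rw [LSeries.term_of_ne_zero hn]
      rw [show ((k:ℂ)) = ((k : ℕ) : ℂ) from rfl, Complex.cpow_natCast]
      rw [zeta_apply_ne hn]
      push_cast
      ring
  have hm : LSeries (↗(μ : ArithmeticFunction ℤ)) (k : ℂ)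
      = ((∑' d : ℕ, (μ d : ℝ) / (d : ℝ) ^ k : ℝ) : ℂ) := by
    rw [Complex.ofReal_tsum]
    refine tsum_congr fun n => ?_
    rcases eq_or_ne n 0 with rfl | hn
    · simp [LSeries.term_zero, zero_pow hk0]
    · rw [LSeries.term_of_ne_zero hn]
      rw [show ((k:ℂ)) = ((k : ℕ) : ℂ) from rfl, Complex.cpow_natCast]
      push_cast
      ring
  rw [hz, hm] at h
  exact_mod_cast h

lemma harmonic_le_log (L : ℕ) (hL : 1 ≤ L) :
    ∑ d ∈ Finset.Icc 1 L, (1 : ℝ) / d ≤ 1 + Real.log L := by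
  induction L, hL using Nat.le_induction with
  | base => simp
  | succ n hn ih =>
    rw [Finset.sum_Icc_succ_top (by omega : 1 ≤ n + 1)]
    have hn0 : (0:ℝ) < n := by exact_mod_cast hn
    have hn1 : (0:ℝ) < (n:ℝ) + 1 := by linarith
    have hlog : Real.log n + 1 / ((n:ℝ) + 1) ≤ Real.log ((n:ℝ) + 1) := by
      have hx : (0:ℝ) < (n:ℝ) / ((n:ℝ) + 1) := by positivity
      have h1 := Real.log_le_sub_one_of_pos hx
      rw [Real.log_div (by positivity) (by positivity)] at h1
      have h2 : (n:ℝ) / ((n:ℝ)+1) - 1 = -(1 / ((n:ℝ)+1)) := by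
        field_simp
        ring
      rw [h2] at h1
      linarith
    push_cast
    linarith

lemma tsum_inv_sq_tail (L : ℕ) (hL : 1 ≤ L) :
    ∑' i : ℕ, 1 / ((i : ℝ) + L + 1) ^ 2 ≤ 1 / (L:ℝ) := by
  have hnn : ∀ i : ℕ, 0 ≤ 1 / ((i : ℝ) + L + 1) ^ 2 := fun i => by positivity
  apply Real.tsum_le_of_sum_range_le hnn
  intro n
  rcases Nat.eq_zero_or_pos n with rfl | hn
  · simp only [Finset.range_zero, Finset.sum_empty]
    positivity
  have key : ∑ i ∈ Finset.range n, 1 / ((i : ℝ) + L + 1) ^ 2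
      = ∑ j ∈ Finset.Ioc L (L + n), (((j:ℝ)) ^ 2)⁻¹ := by
    rw [show Finset.Ioc L (L + n) = Finset.Ico (L + 1) (L + n + 1) from by
      ext j; simp [Finset.mem_Ioc, Finset.mem_Ico]]
    rw [Finset.sum_Ico_eq_sum_range]
    rw [show L + n + 1 - (L + 1) = n from by omega]
    refine Finset.sum_congr rfl fun i _ => ?_
    push_cast
    rw [one_div]
    ring_nf
  rw [key]
  calc ∑ j ∈ Finset.Ioc L (L + n), (((j:ℝ)) ^ 2)⁻¹
      ≤ ((L:ℝ))⁻¹ - ((L + n : ℕ):ℝ)⁻¹ := sum_Ioc_inv_sq_le_sub (by omega) (by omega)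
    _ ≤ 1 / (L:ℝ) := by
        rw [one_div]
        have : (0:ℝ) ≤ ((L + n : ℕ):ℝ)⁻¹ := by positivity
        linarith

lemma moebius_summable (k : ℕ) (hk : 2 ≤ k) :
    Summable (fun d : ℕ => (μ d : ℝ) / (d : ℝ) ^ k) := by
  apply Summable.of_norm_bounded (g := fun d : ℕ => 1 / (d : ℝ) ^ k)
    (Real.summable_one_div_nat_pow.mpr hk)
  intro d
  rw [Real.norm_eq_abs, abs_div, abs_pow, Nat.abs_cast]
  rcases Nat.eq_zero_or_pos d with rfl | hd
  · simp [zero_pow (by omega : k ≠ 0)]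
  · have hpos : (0:ℝ) < (d:ℝ) ^ k := by positivity
    apply div_le_div_of_nonneg_right ?_ hpos.le
    exact_mod_cast (abs_moebius_le_one : |μ d| ≤ 1)

set_option maxHeartbeats 1000000 in
lemma moebius_tail (k L : ℕ) (hk : 3 ≤ k) (hL : 2 ≤ L) :
    |(∑' d : ℕ, (μ d : ℝ) / (d : ℝ) ^ k) - ∑ d ∈ Finset.Icc 1 L, (μ d : ℝ) / (d : ℝ) ^ k|
      ≤ 1 / (L : ℝ) ^ (k - 1) := by
  set f : ℕ → ℝ := fun d => (μ d : ℝ) / (d : ℝ) ^ k with hf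
  have hL0 : (0:ℝ) < L := by exact_mod_cast (by omega : 0 < L)
  have hsum := moebius_summable k (by omega)
  have hIcc : ∑ d ∈ Finset.Icc 1 L, f d = ∑ d ∈ Finset.range (L+1), f d := by
    rw [show Finset.range (L+1) = insert 0 (Finset.Icc 1 L) from by
      ext j; simp; omega]
    rw [Finset.sum_insert (by simp)]
    have h0 : f 0 = 0 := by simp [hf, zero_pow (by omega : k ≠ 0)]
    rw [h0, zero_add]
  have hdecomp := Summable.sum_add_tsum_nat_add (f := f) (L+1) hsum
  rw [hIcc, ← hdecomp, add_sub_cancel_left]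
  have hsumtail : Summable (fun i => f (i + (L+1))) :=
    (summable_nat_add_iff (f := f) (L+1)).mpr hsum
  have habs : Summable (fun i => |f (i + (L+1))|) := hsumtail.abs
  have hsq : Summable (fun i : ℕ => 1 / ((i:ℝ) + L + 1) ^ 2) := by
    have h1 : Summable (fun i : ℕ => 1 / (((i + (L+1) : ℕ)):ℝ) ^ 2) :=
      (summable_nat_add_iff (f := fun n : ℕ => 1 / (n:ℝ) ^ 2) (L+1)).mpr
        (Real.summable_one_div_nat_pow.mpr (by norm_num))
    refine h1.congr fun i => ?_
    push_cast
    ring_nf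
  have hbig : Summable (fun i : ℕ => 1 / ((L:ℝ))^(k-2) * (1 / ((i:ℝ) + L + 1) ^ 2)) :=
    hsq.mul_left _
  have hpt : ∀ i : ℕ, |f (i + (L+1))| ≤ 1 / ((L:ℝ))^(k-2) * (1 / ((i:ℝ) + L + 1) ^ 2) := by
    intro i
    set x : ℝ := (i:ℝ) + L + 1 with hx
    have hxL : (L:ℝ) ≤ x := by rw [hx]; push_cast; linarith [Nat.cast_nonneg (α := ℝ) i]
    have hx0 : (0:ℝ) < x := by linarith
    have hcast : ((i + (L+1) : ℕ) : ℝ) = x := by rw [hx]; push_cast; ring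
    have h1 : |f (i + (L+1))| ≤ 1 / x ^ k := by
      rw [hf]
      simp only []
      rw [abs_div, abs_pow, Nat.abs_cast, hcast]
      apply div_le_div_of_nonneg_right ?_ (by positivity : (0:ℝ) ≤ x ^ k)
      exact_mod_cast (abs_moebius_le_one (n := i + (L+1)))
    refine h1.trans ?_
    rw [div_mul_div_comm, one_mul]
    apply one_div_le_one_div_of_le (by positivity)
    calc (L:ℝ)^(k-2) * x ^ 2 ≤ x^(k-2) * x ^ 2 := by
          apply mul_le_mul_of_nonneg_right (pow_le_pow_left₀ hL0.le hxL _) (by positivity)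
      _ = x ^ k := by rw [← pow_add]; congr 1; omega
  calc |∑' i, f (i + (L+1))| ≤ ∑' i, |f (i + (L+1))| := by
        have := norm_tsum_le_tsum_norm (f := fun i => f (i + (L+1)))
          (by simpa only [Real.norm_eq_abs] using habs)
        simpa only [Real.norm_eq_abs] using this
    _ ≤ ∑' i : ℕ, 1 / ((L:ℝ))^(k-2) * (1 / ((i:ℝ) + L + 1) ^ 2) := Summable.tsum_le_tsum hpt habs hbig
    _ = 1 / ((L:ℝ))^(k-2) * ∑' i : ℕ, 1 / ((i:ℝ) + L + 1) ^ 2 := tsum_mul_left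
    _ ≤ 1 / ((L:ℝ))^(k-2) * (1 / (L:ℝ)) := by
        apply mul_le_mul_of_nonneg_left (tsum_inv_sq_tail L (by omega)) (by positivity)
    _ = 1 / (L : ℝ) ^ (k - 1) := by
        rw [div_mul_div_comm, one_mul, ← pow_succ]
        congr 2
        omega

lemma cast_nat_div (L d : ℕ) :
    ((L / d : ℕ) : ℝ) = (L:ℝ)/(d:ℝ) - Int.fract ((L:ℝ)/(d:ℝ)) := by
  have h0 : (0:ℝ) ≤ (L:ℝ)/(d:ℝ) := by positivity
  rw [Int.self_sub_fract, ← Int.natCast_floor_eq_floor h0]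
  rw [Nat.floor_div_natCast, Nat.floor_natCast]
  norm_cast

end Aux

set_option maxHeartbeats 1000000 in
theorem stmt12 (k : ℕ) (hk : 3 ≤ k) :
    ∃ C : ℝ, 0 < C ∧
      ∀ L : ℕ, 2 ≤ L →
        |(visCount k L : ℝ) - (L : ℝ) ^ k / zetaR k
            + (k : ℝ) * MFun k L * (L : ℝ) ^ (k - 1)|
          ≤ C * (L : ℝ) ^ (k - 2) * Real.log L := by
  refine ⟨3 * (2 ^ k + 1), by positivity, fun L hL => ?_⟩
  have hk0 : k ≠ 0 := by omega
  have hL0 : (0:ℝ) < L := by exact_mod_cast (by omega : 0 < L)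
  have hL1 : (1:ℝ) ≤ L := by exact_mod_cast (by omega : 1 ≤ L)
  set T : ℝ := ∑' d : ℕ, (μ d : ℝ) / (d : ℝ) ^ k with hT
  set P : ℝ := ∑ d ∈ Finset.Icc 1 L, (μ d : ℝ) / (d : ℝ) ^ k with hP
  have hzm : zetaR k * T = 1 := zeta_moebius_real k (by omega)
  have hzT : (L:ℝ) ^ k / zetaR k = (L:ℝ)^k * T := by
    rw [div_eq_mul_inv]
    congr 1
    exact inv_eq_of_mul_eq_one_right hzm
  have hvc : (visCount k L : ℝ) = ∑ d ∈ Finset.Icc 1 L, (μ d : ℝ) * ((L / d : ℕ) : ℝ) ^ k := by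
    have h := visCount_eq k L (by omega)
    have h2 := congrArg (fun z : ℤ => (z : ℝ)) h
    push_cast at h2
    exact h2
  set E : ℝ := ∑ d ∈ Finset.Icc 1 L,
    (μ d : ℝ) * (((L / d : ℕ) : ℝ) ^ k - ((L:ℝ)/(d:ℝ)) ^ k
      + (k:ℝ) * ((L:ℝ)/(d:ℝ)) ^ (k-1) * Int.fract ((L:ℝ)/(d:ℝ))) with hE
  -- the three component sums
  have h2 : ∑ d ∈ Finset.Icc 1 L, (μ d : ℝ) * ((L:ℝ)/(d:ℝ)) ^ k = (L:ℝ)^k * P := by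
    rw [hP, Finset.mul_sum]
    refine Finset.sum_congr rfl fun d hd => ?_
    rw [div_pow]
    ring
  have h3 : ∑ d ∈ Finset.Icc 1 L,
      (μ d : ℝ) * ((k:ℝ) * ((L:ℝ)/(d:ℝ)) ^ (k-1) * Int.fract ((L:ℝ)/(d:ℝ)))
      = (k:ℝ) * MFun k L * (L:ℝ)^(k-1) := by
    rw [MFun, Finset.mul_sum, Finset.sum_mul]
    refine Finset.sum_congr rfl fun d hd => ?_
    rw [div_pow]
    ring
  have hsplit : E = (visCount k L : ℝ) - (L:ℝ)^k * P + (k:ℝ) * MFun k L * (L:ℝ)^(k-1) := by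
    rw [hE, hvc, ← h2, ← h3, ← Finset.sum_sub_distrib, ← Finset.sum_add_distrib]
    exact Finset.sum_congr rfl fun d hd => by ring
  -- main quantity equals E - L^k (T - P)
  have hmain : (visCount k L : ℝ) - (L : ℝ) ^ k / zetaR k
      + (k : ℝ) * MFun k L * (L : ℝ) ^ (k - 1) = E - (L:ℝ)^k * (T - P) := by
    rw [hzT, hsplit]
    ring
  rw [hmain]
  -- bound on |E|
  have hEbound : |E| ≤ 2^k * (L:ℝ)^(k-2) * (1 + Real.log L) := by
    calc |E| ≤ ∑ d ∈ Finset.Icc 1 L,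
          |(μ d : ℝ) * (((L / d : ℕ) : ℝ) ^ k - ((L:ℝ)/(d:ℝ)) ^ k
            + (k:ℝ) * ((L:ℝ)/(d:ℝ)) ^ (k-1) * Int.fract ((L:ℝ)/(d:ℝ)))| :=
          Finset.abs_sum_le_sum_abs _ _
      _ ≤ ∑ d ∈ Finset.Icc 1 L, 2^k * (L:ℝ)^(k-2) * (1/(d:ℝ)) := by
          refine Finset.sum_le_sum fun d hd => ?_
          rw [Finset.mem_Icc] at hd
          have hd0 : (0:ℝ) < d := by exact_mod_cast hd.1
          have hd1 : (1:ℝ) ≤ d := by exact_mod_cast hd.1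
          have hdL : (d:ℝ) ≤ L := by exact_mod_cast hd.2
          have ha : (1:ℝ) ≤ (L:ℝ)/(d:ℝ) := (one_le_div hd0).mpr hdL
          have hb0 : 0 ≤ Int.fract ((L:ℝ)/(d:ℝ)) := Int.fract_nonneg _
          have hb1 : Int.fract ((L:ℝ)/(d:ℝ)) ≤ 1 := (Int.fract_lt_one _).le
          rw [abs_mul, cast_nat_div]
          have hmu : |(μ d : ℝ)| ≤ 1 := by exact_mod_cast (abs_moebius_le_one : |μ d| ≤ 1)
          calc |(μ d : ℝ)| * |((L:ℝ)/(d:ℝ) - Int.fract ((L:ℝ)/(d:ℝ))) ^ k - ((L:ℝ)/(d:ℝ)) ^ k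
                + (k:ℝ) * ((L:ℝ)/(d:ℝ)) ^ (k-1) * Int.fract ((L:ℝ)/(d:ℝ))|
              ≤ 1 * (2^k * ((L:ℝ)/(d:ℝ))^(k-2)) :=
                mul_le_mul hmu (pow_expand_bound k hk ha hb0 hb1) (abs_nonneg _)
                  (by norm_num)
            _ = 2^k * ((L:ℝ)^(k-2)/(d:ℝ)^(k-2)) := by rw [one_mul, div_pow]
            _ ≤ 2^k * (L:ℝ)^(k-2) * (1/(d:ℝ)) := by
                rw [mul_assoc, div_eq_mul_one_div ((L:ℝ)^(k-2))]
                apply mul_le_mul_of_nonneg_left _ (by positivity : (0:ℝ) ≤ 2^k)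
                apply mul_le_mul_of_nonneg_left _ (by positivity : (0:ℝ) ≤ (L:ℝ)^(k-2))
                apply one_div_le_one_div_of_le hd0
                exact le_self_pow₀ hd1 (by omega)
      _ = 2^k * (L:ℝ)^(k-2) * ∑ d ∈ Finset.Icc 1 L, (1/(d:ℝ)) := by
          rw [← Finset.mul_sum]
      _ ≤ 2^k * (L:ℝ)^(k-2) * (1 + Real.log L) := by
          apply mul_le_mul_of_nonneg_left (harmonic_le_log L (by omega)) (by positivity)
  -- bound on tail
  have htail : (L:ℝ)^k * |T - P| ≤ (L:ℝ)^(k-2) * (1 + Real.log L) := by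
    have h1 : |T - P| ≤ 1 / (L:ℝ)^(k-1) := moebius_tail k L hk hL
    have h2 : (L:ℝ)^k * (1 / (L:ℝ)^(k-1)) = (L:ℝ) := by
      rw [show k = (k-1)+1 from by omega, pow_succ]
      field_simp
      rw [Nat.add_sub_cancel]
    have h3 : (L:ℝ)^k * |T - P| ≤ (L:ℝ) := by
      calc (L:ℝ)^k * |T - P| ≤ (L:ℝ)^k * (1 / (L:ℝ)^(k-1)) :=
            mul_le_mul_of_nonneg_left h1 (by positivity)
        _ = (L:ℝ) := h2
    have h4 : (L:ℝ) ≤ (L:ℝ)^(k-2) := le_self_pow₀ hL1 (by omega)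
    have h5 : (1:ℝ) ≤ 1 + Real.log L := by
      have := Real.log_nonneg hL1
      linarith
    calc (L:ℝ)^k * |T - P| ≤ (L:ℝ)^(k-2) := h3.trans h4
      _ ≤ (L:ℝ)^(k-2) * (1 + Real.log L) := le_mul_of_one_le_right (by positivity) h5
  -- combine
  have hcomb : |E - (L:ℝ)^k * (T - P)| ≤ (2^k + 1) * ((L:ℝ)^(k-2) * (1 + Real.log L)) := by
    calc |E - (L:ℝ)^k * (T - P)| ≤ |E| + |(L:ℝ)^k * (T - P)| := abs_sub _ _
      _ = |E| + (L:ℝ)^k * |T - P| := by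
          rw [abs_mul, abs_of_nonneg (by positivity : (0:ℝ) ≤ (L:ℝ)^k)]
      _ ≤ 2^k * (L:ℝ)^(k-2) * (1 + Real.log L) + (L:ℝ)^(k-2) * (1 + Real.log L) := by
          exact add_le_add hEbound htail
      _ = (2^k + 1) * ((L:ℝ)^(k-2) * (1 + Real.log L)) := by ring
  refine hcomb.trans ?_
  -- 1 + log L ≤ 3 log L
  have hlog2 : Real.log 2 ≤ Real.log L := by
    apply Real.log_le_log (by norm_num)
    exact_mod_cast hL
  have hlog2' : (0.6931471803 : ℝ) < Real.log 2 := Real.log_two_gt_d9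
  have hlogL : (1:ℝ) + Real.log L ≤ 3 * Real.log L := by
    linarith
  calc (2^k + 1) * ((L:ℝ)^(k-2) * (1 + Real.log L))
      ≤ (2^k + 1) * ((L:ℝ)^(k-2) * (3 * Real.log L)) := by
        apply mul_le_mul_of_nonneg_left _ (by positivity : (0:ℝ) ≤ 2^k + 1)
        apply mul_le_mul_of_nonneg_left hlogL (by positivity)
    _ = 3 * (2 ^ k + 1) * (L:ℝ)^(k-2) * Real.log L := by ring
end

section
/- Let V₂ = {(x,y) ∈ ℕ² : gcd(x,y) = 1}. Then for every integer L ≥ 9, |V₂ ∩ [1,L]²| / L² ≥ 6/π² − (log L)/L. -/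
open Finset ArithmeticFunction Real
open scoped ArithmeticFunction.Moebius ArithmeticFunction.zeta

/-- The number of points of `V₂ ∩ [1,L]²`, where
`V₂ = {(x,y) ∈ ℕ² : gcd(x,y) = 1}` is the set of points of `ℕ²`
visible from the origin. -/
def visCount2 (L : ℕ) : ℕ :=
  ((Finset.Icc 1 L ×ˢ Finset.Icc 1 L).filter fun q => Nat.gcd q.1 q.2 = 1).card

/-! ### Möbius preliminaries -/

lemma sum_mu_divisors (n : ℕ) : (∑ d ∈ n.divisors, μ d) = if n = 1 then 1 else 0 := by
  have h : ((μ * ζ : ArithmeticFunction ℤ)) n = (1 : ArithmeticFunction ℤ) n := by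
    rw [moebius_mul_coe_zeta]
  rw [coe_mul_zeta_apply, one_apply] at h
  exact h

lemma divisors_eq_filter {n L : ℕ} (h1 : 1 ≤ n) (h2 : n ≤ L) :
    n.divisors = (Icc 1 L).filter (· ∣ n) := by
  ext d
  simp only [Nat.mem_divisors, mem_filter, mem_Icc]
  constructor
  · rintro ⟨hd, hn⟩
    exact ⟨⟨Nat.pos_of_dvd_of_pos hd h1, le_trans (Nat.le_of_dvd h1 hd) h2⟩, hd⟩
  · rintro ⟨_, hd⟩
    exact ⟨hd, by omega⟩

lemma abs_mu_real_le (n : ℕ) : |(μ n : ℝ)| ≤ 1 := by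
  have := abs_moebius_le_one (n := n)
  calc |(μ n : ℝ)| = ((|μ n| : ℤ) : ℝ) := by push_cast; rfl
  _ ≤ 1 := by exact_mod_cast this

/-! ### The fundamental counting identity -/

lemma visCount2_eq (L : ℕ) :
    (visCount2 L : ℤ) = ∑ d ∈ Icc 1 L, μ d * ((L / d : ℕ) : ℤ) ^ 2 := by
  have hbox : ∀ q ∈ (Icc 1 L ×ˢ Icc 1 L),
      (if Nat.gcd q.1 q.2 = 1 then (1:ℤ) else 0)
        = ∑ d ∈ Icc 1 L, if d ∣ q.1 ∧ d ∣ q.2 then μ d else 0 := by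
    intro q hq
    simp only [mem_product, mem_Icc] at hq
    have h1 : 1 ≤ Nat.gcd q.1 q.2 := Nat.gcd_pos_of_pos_left _ (by omega)
    have h2 : Nat.gcd q.1 q.2 ≤ L := le_trans (Nat.gcd_le_left _ (by omega)) hq.1.2
    rw [← sum_mu_divisors, divisors_eq_filter h1 h2, sum_filter]
    refine Finset.sum_congr rfl fun d _ => ?_
    simp only [Nat.dvd_gcd_iff]
  calc (visCount2 L : ℤ)
      = ∑ q ∈ Icc 1 L ×ˢ Icc 1 L, if Nat.gcd q.1 q.2 = 1 then (1:ℤ) else 0 := by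
        rw [visCount2, card_filter]; push_cast; rfl
    _ = ∑ q ∈ Icc 1 L ×ˢ Icc 1 L, ∑ d ∈ Icc 1 L,
          if d ∣ q.1 ∧ d ∣ q.2 then (μ d : ℤ) else 0 := Finset.sum_congr rfl hbox
    _ = ∑ d ∈ Icc 1 L, ∑ q ∈ Icc 1 L ×ˢ Icc 1 L,
          if d ∣ q.1 ∧ d ∣ q.2 then (μ d : ℤ) else 0 := Finset.sum_comm
    _ = ∑ d ∈ Icc 1 L, μ d * ((L / d : ℕ) : ℤ) ^ 2 := by
        refine Finset.sum_congr rfl fun d _ => ?_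
        rw [← sum_filter, sum_const,
          filter_product (fun a => d ∣ a) (fun b => d ∣ b), card_product]
        have hc : ((Icc 1 L).filter (fun a => d ∣ a)).card = L / d := by
          rw [show Icc 1 L = Ioc 0 L from rfl]
          exact Nat.Ioc_filter_dvd_card_eq_div L d
        rw [hc, nsmul_eq_mul]
        push_cast [Int.natCast_ediv]
        ring

lemma sum_mu_floor_eq_one (L : ℕ) (hL : 1 ≤ L) :
    ∑ d ∈ Icc 1 L, μ d * ((L / d : ℕ) : ℤ) = 1 := by
  have hbox : ∀ n ∈ Icc 1 L, (if n = 1 then (1:ℤ) else 0)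
      = ∑ d ∈ Icc 1 L, if d ∣ n then (μ d:ℤ) else 0 := by
    intro n hn; simp only [mem_Icc] at hn
    rw [← sum_mu_divisors, divisors_eq_filter hn.1 hn.2, sum_filter]
  calc (∑ d ∈ Icc 1 L, μ d * ((L / d : ℕ) : ℤ))
      = ∑ d ∈ Icc 1 L, ∑ n ∈ Icc 1 L, if d ∣ n then (μ d:ℤ) else 0 := by
        refine Finset.sum_congr rfl fun d _ => ?_
        rw [← sum_filter, sum_const, show Icc 1 L = Ioc 0 L from rfl,
          Nat.Ioc_filter_dvd_card_eq_div, nsmul_eq_mul, mul_comm]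
    _ = ∑ n ∈ Icc 1 L, ∑ d ∈ Icc 1 L, if d ∣ n then (μ d:ℤ) else 0 := Finset.sum_comm
    _ = ∑ n ∈ Icc 1 L, if n = 1 then (1:ℤ) else 0 :=
        (Finset.sum_congr rfl hbox).symm
    _ = 1 := by
        rw [Finset.sum_ite_eq' (Icc 1 L) 1 (fun _ => (1:ℤ))]
        simp [hL]

/-! ### `∑ μ(d)/d ≤ 1` -/

lemma mu_div_sum_le_one (L : ℕ) (hL : 1 ≤ L) :
    ∑ d ∈ Icc 1 L, (μ d : ℝ) / d ≤ 1 := by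
  have hL0 : (0:ℝ) < L := by exact_mod_cast (by omega : 0 < L)
  have hid : (∑ d ∈ Icc 1 L, (μ d:ℝ) * ((L / d : ℕ) : ℝ)) = 1 := by
    have := congrArg (Int.cast : ℤ → ℝ) (sum_mu_floor_eq_one L hL)
    push_cast at this
    exact this
  have hind : ∑ d ∈ Icc 1 L, (if d = 1 then (0:ℝ) else 1) = (L:ℝ) - 1 := by
    have : ∀ d ∈ Icc 1 L, (if d = 1 then (0:ℝ) else 1) = 1 - (if d = 1 then (1:ℝ) else 0) := by
      intro d _; by_cases h : d = 1 <;> simp [h]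
    rw [Finset.sum_congr rfl this, Finset.sum_sub_distrib, Finset.sum_const,
      Finset.sum_ite_eq' (Icc 1 L) 1 (fun _ => (1:ℝ))]
    simp [hL, Nat.card_Icc]
  have key : ∑ d ∈ Icc 1 L, ((μ d:ℝ) * ((L:ℝ)/d) - (μ d:ℝ) * ((L / d : ℕ) : ℝ))
      ≤ ∑ d ∈ Icc 1 L, (if d = 1 then (0:ℝ) else 1) := by
    refine Finset.sum_le_sum fun d hd => ?_
    simp only [mem_Icc] at hd
    by_cases h1 : d = 1
    · subst h1; simp
    · rw [if_neg h1]
      have hdpos : 0 < d := by omega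
      have hd0 : (0:ℝ) < d := by exact_mod_cast hdpos
      have hfr0 : (0:ℝ) ≤ (L:ℝ)/d - ((L/d:ℕ):ℝ) := by
        have := Nat.cast_div_le (m := L) (n := d) (α := ℝ)
        linarith
      have hfr1 : (L:ℝ)/d - ((L/d:ℕ):ℝ) ≤ 1 := by
        have h2 : L < (L/d + 1) * d := (Nat.div_lt_iff_lt_mul hdpos).mp (Nat.lt_succ_self _)
        have h3 : (L:ℝ) < (((L/d:ℕ):ℝ) + 1) * d := by exact_mod_cast h2
        rw [sub_le_iff_le_add, div_le_iff₀ hd0]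
        nlinarith [h3]
      have habs := abs_le.mp (abs_mu_real_le d)
      calc (μ d:ℝ) * ((L:ℝ)/d) - (μ d:ℝ) * ((L / d : ℕ) : ℝ)
          = (μ d:ℝ) * ((L:ℝ)/d - ((L/d:ℕ):ℝ)) := by ring
        _ ≤ 1 := by nlinarith
  have hsum : ∑ d ∈ Icc 1 L, (μ d:ℝ) * ((L:ℝ)/d) ≤ (L:ℝ) := by
    rw [Finset.sum_sub_distrib] at key
    rw [hid, hind] at key
    linarith
  have heq : ∑ d ∈ Icc 1 L, (μ d : ℝ) / d
      = (1/(L:ℝ)) * ∑ d ∈ Icc 1 L, (μ d:ℝ) * ((L:ℝ)/d) := by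
    rw [Finset.mul_sum]
    refine Finset.sum_congr rfl fun d hd => ?_
    simp only [mem_Icc] at hd
    have hd0 : (d:ℝ) ≠ 0 := by exact_mod_cast (by omega : d ≠ 0)
    field_simp
  rw [heq]
  calc (1/(L:ℝ)) * ∑ d ∈ Icc 1 L, (μ d:ℝ) * ((L:ℝ)/d) ≤ (1/(L:ℝ)) * L := by
        gcongr
    _ = 1 := by field_simp
lemma summable_mu_sq : Summable (fun n : ℕ => (μ n : ℝ) / (n : ℝ) ^ 2) := by
  refine Summable.of_norm_bounded (g := fun n : ℕ => ((n : ℝ) ^ 2)⁻¹) (Real.summable_nat_pow_inv.mpr one_lt_two) ?_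
  intro n
  rw [norm_div, div_eq_mul_inv]
  have h1 : ‖(μ n : ℝ)‖ ≤ 1 := by rw [Real.norm_eq_abs]; exact abs_mu_real_le n
  have h2 : ‖(n : ℝ) ^ 2‖ = (n : ℝ) ^ 2 := by
    rw [Real.norm_eq_abs, abs_of_nonneg (by positivity)]
  rw [h2]
  have : (0:ℝ) ≤ ((n:ℝ)^2)⁻¹ := by positivity
  calc ‖(μ n : ℝ)‖ * ((n:ℝ)^2)⁻¹ ≤ 1 * ((n:ℝ)^2)⁻¹ := by gcongr
  _ = ((n:ℝ)^2)⁻¹ := one_mul _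

open LSeries.notation in
lemma hasSum_mu_sq : HasSum (fun n : ℕ => (μ n : ℝ) / (n : ℝ) ^ 2) (6 / π ^ 2) := by
  have hs : (1 : ℝ) < (2 : ℂ).re := by norm_num
  have hsum : LSeriesSummable ↗μ 2 := ArithmeticFunction.LSeriesSummable_moebius_iff.mpr hs
  have hval : LSeries ↗μ 2 = 6 / (π : ℂ) ^ 2 := by
    have h1 := ArithmeticFunction.LSeries_zeta_mul_Lseries_moebius (s := 2) hs
    rw [ArithmeticFunction.LSeries_zeta_eq_riemannZeta hs, riemannZeta_two] at h1
    have hπ : (π : ℂ) ^ 2 ≠ 0 := by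
      simpa using Complex.ofReal_ne_zero.mpr Real.pi_ne_zero
    rw [eq_div_iff hπ]
    field_simp at h1
    linear_combination h1
  have hterm : ∀ n : ℕ, LSeries.term ↗μ 2 n = (((μ n : ℝ) / (n : ℝ) ^ 2 : ℝ) : ℂ) := by
    intro n
    rcases eq_or_ne n 0 with rfl | hn
    · simp [LSeries.term]
    · rw [LSeries.term_of_ne_zero hn,
        show ((2:ℂ)) = ((2:ℕ):ℂ) from by norm_num, Complex.cpow_natCast]
      push_cast
      norm_num
  have hHS : HasSum (fun n => (((μ n : ℝ) / (n : ℝ) ^ 2 : ℝ) : ℂ)) (LSeries ↗μ 2) := by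
    have := hsum.LSeriesHasSum
    rw [LSeriesHasSum] at this
    exact (funext hterm) ▸ this
  rw [hval] at hHS
  have : HasSum (fun n => (((μ n : ℝ) / (n : ℝ) ^ 2 : ℝ) : ℂ)) (((6 / π ^ 2 : ℝ) : ℂ)) := by
    convert hHS using 2
    push_cast
    ring
  exact (RCLike.hasSum_ofReal ℂ).mp this

lemma tail_sq_le (L : ℕ) (hL : 1 ≤ L) : ∀ N, L ≤ N →
    ∑ d ∈ Icc (L + 1) N, (1 : ℝ) / (d : ℝ) ^ 2 ≤ 1 / L - 1 / N := by
  refine Nat.le_induction ?_ ?_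
  · rw [Finset.Icc_eq_empty (by omega)]
    simp
  · intro N hN ih
    rw [Finset.sum_Icc_succ_top (by omega)]
    have hN0 : (0:ℝ) < (N:ℝ) := by exact_mod_cast (by omega : 0 < N)
    have key : (1:ℝ) / ((N:ℝ)+1) ^ 2 ≤ 1 / N - 1 / ((N:ℝ)+1) := by
      rw [div_sub_div _ _ (ne_of_gt hN0) (by positivity)]
      rw [div_le_div_iff₀ (by positivity) (by positivity)]
      ring_nf
      nlinarith [hN0]
    have hcast : ((N + 1 : ℕ) : ℝ) = (N : ℝ) + 1 := by push_cast; ring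
    rw [hcast]
    linarith [ih]

lemma partial_lower (L : ℕ) (hL : 1 ≤ L) :
    6 / π ^ 2 - 1 / L ≤ ∑ d ∈ Icc 1 L, (μ d : ℝ) / (d : ℝ) ^ 2 := by
  have h0 := hasSum_mu_sq.tendsto_sum_nat
  have h1 : Filter.Tendsto (fun M : ℕ => ∑ d ∈ Icc 1 M, (μ d : ℝ) / (d : ℝ) ^ 2)
      Filter.atTop (nhds (6 / π ^ 2)) := by
    have h2 := h0.comp (Filter.tendsto_add_atTop_nat 1)
    convert h2 using 2 with M
    rw [Function.comp_apply]
    have : Finset.range (M + 1) = insert 0 (Icc 1 M) := by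
      ext x; simp [Finset.mem_range, Finset.mem_insert, Finset.mem_Icc]; omega
    rw [this, Finset.sum_insert (by simp)]
    simp
  rw [sub_le_iff_le_add]
  refine le_of_tendsto h1 ?_
  filter_upwards [Filter.eventually_ge_atTop L] with M hM
  have hsplit : ∑ d ∈ Icc 1 M, (μ d : ℝ) / (d : ℝ) ^ 2
      = ∑ d ∈ Icc 1 L, (μ d : ℝ) / (d : ℝ) ^ 2 + ∑ d ∈ Icc (L+1) M, (μ d : ℝ) / (d : ℝ) ^ 2 := by
    rw [show Icc 1 L = Ioc 0 L from rfl, show Icc 1 M = Ioc 0 M from rfl,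
      Finset.Icc_add_one_left_eq_Ioc]
    exact (Finset.sum_Ioc_consecutive _ (by omega) hM).symm
  rw [hsplit]
  gcongr
  calc ∑ d ∈ Icc (L+1) M, (μ d : ℝ) / (d : ℝ) ^ 2
      ≤ ∑ d ∈ Icc (L+1) M, (1:ℝ) / (d : ℝ) ^ 2 := by
        refine Finset.sum_le_sum fun d hd => ?_
        have h := abs_mu_real_le d
        have hd2 : (0:ℝ) < (d:ℝ)^2 := by
          simp only [mem_Icc] at hd
          have : (0:ℝ) < (d:ℝ) := by exact_mod_cast (by omega : 0 < d)
          positivity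
        have : (μ d : ℝ) ≤ 1 := (abs_le.mp h).2
        gcongr
    _ ≤ 1 / L - 1 / M := tail_sq_le L hL M hM
    _ ≤ 1 / L := by
        have : (0:ℝ) ≤ 1 / (M:ℝ) := by positivity
        linarith

lemma sf_of_check {n : ℕ} (h0 : n ≠ 0) (H : ∀ d ∈ Finset.range (n+1), d * d ∣ n → d = 1) :
    Squarefree n := by
  intro x hx
  have hxn : x ≤ n := Nat.le_of_dvd (Nat.pos_of_ne_zero h0) ((dvd_mul_left x x).trans hx)
  exact Nat.isUnit_iff.mpr (H x (Finset.mem_range.mpr (by omega)) hx)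

lemma not_sf {n d : ℕ} (hd : d ≠ 1) (hdvd : d * d ∣ n) : ¬ Squarefree n :=
  fun h => hd (Nat.isUnit_iff.mp (h d hdvd))

lemma musq_eval (d : ℕ) : ((μ d : ℝ))^2 = if Squarefree d then 1 else 0 := by
  by_cases h : Squarefree d
  · rw [if_pos h]
    have := moebius_sq_eq_one_of_squarefree h
    exact_mod_cast congrArg (Int.cast : ℤ → ℝ) this
  · rw [if_neg h]
    simp [moebius_eq_zero_of_not_squarefree h]

lemma sf_base : ∑ d ∈ Icc 2 16, ((μ d : ℝ))^2 / d = 26258 / 15015 := by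
  have hins : Finset.range 17 = insert 0 (insert 1 (Icc 2 16)) := by
    ext x
    simp only [Finset.mem_range, Finset.mem_insert, Finset.mem_Icc]
    omega
  have key : ∑ d ∈ Finset.range 17, ((μ d : ℝ))^2 / d = 1 + 26258/15015 := by
    simp only [Finset.sum_range_succ, Finset.sum_range_zero, musq_eval]
    norm_num [show Squarefree 1 from squarefree_one, show Squarefree 2 from Nat.squarefree_two,
      show Squarefree 3 from sf_of_check (by norm_num) (by decide), show ¬ Squarefree 4 from not_sf (d := 2) (by norm_num) (by norm_num),
      show Squarefree 5 from sf_of_check (by norm_num) (by decide), show Squarefree 6 from sf_of_check (by norm_num) (by decide),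
      show Squarefree 7 from sf_of_check (by norm_num) (by decide), show ¬ Squarefree 8 from not_sf (d := 2) (by norm_num) (by norm_num),
      show ¬ Squarefree 9 from not_sf (d := 3) (by norm_num) (by norm_num), show Squarefree 10 from sf_of_check (by norm_num) (by decide),
      show Squarefree 11 from sf_of_check (by norm_num) (by decide), show ¬ Squarefree 12 from not_sf (d := 2) (by norm_num) (by norm_num),
      show Squarefree 13 from sf_of_check (by norm_num) (by decide), show Squarefree 14 from sf_of_check (by norm_num) (by decide),
      show Squarefree 15 from sf_of_check (by norm_num) (by decide), show ¬ Squarefree 16 from not_sf (d := 4) (by norm_num) (by norm_num),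
      show ¬ Squarefree 0 from not_squarefree_zero]
  rw [hins, Finset.sum_insert (by simp), Finset.sum_insert (by simp)] at key
  rw [musq_eval] at key
  norm_num [show Squarefree 1 from squarefree_one] at key
  linarith

lemma sf_harmonic_le : ∀ L : ℕ, 16 ≤ L →
    ∑ d ∈ Icc 2 L, ((μ d : ℝ))^2 / d ≤ Real.log L - 1 := by
  refine Nat.le_induction ?_ ?_
  · rw [sf_base]
    have hlog : Real.log 16 = 4 * Real.log 2 := by
      rw [show (16:ℝ) = 2^4 by norm_num, Real.log_pow]
      push_cast; ring
    rw [show ((16:ℕ):ℝ) = (16:ℝ) by norm_num, hlog]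
    nlinarith [Real.log_two_gt_d9]
  · intro L hL ih
    rw [Finset.sum_Icc_succ_top (by omega : 2 ≤ L + 1)]
    have hL0 : (0:ℝ) < L := by exact_mod_cast (by omega : 0 < L)
    have hL10 : (0:ℝ) < (L:ℝ) + 1 := by linarith
    have hstep : Real.log L + 1/((L:ℝ)+1) ≤ Real.log ((L:ℝ)+1) := by
      have h1 := Real.log_le_sub_one_of_pos (show (0:ℝ) < (L:ℝ)/((L:ℝ)+1) by positivity)
      rw [Real.log_div (ne_of_gt hL0) (ne_of_gt hL10)] at h1
      have h2 : (L:ℝ)/((L:ℝ)+1) - 1 = -(1/((L:ℝ)+1)) := by field_simp; ring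
      rw [h2] at h1
      linarith
    have hterm : ((μ (L+1) : ℝ))^2 / ((L+1:ℕ):ℝ) ≤ 1/((L:ℝ)+1) := by
      rw [musq_eval]
      push_cast
      by_cases h : Squarefree (L+1)
      · rw [if_pos h]
      · rw [if_neg h, zero_div]
        positivity
    have hcast : ((L+1:ℕ):ℝ) = (L:ℝ)+1 := by push_cast; ring
    rw [hcast] at hterm ⊢
    linarith

/-! ### Small cases -/

set_option maxRecDepth 4000 in
lemma vc9 : visCount2 9 = 55 := by decide
set_option maxRecDepth 4000 in
lemma vc10 : visCount2 10 = 63 := by decide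
set_option maxRecDepth 4000 in
lemma vc11 : visCount2 11 = 83 := by decide
set_option maxRecDepth 4000 in
lemma vc12 : visCount2 12 = 91 := by decide
set_option maxRecDepth 4000 in
lemma vc13 : visCount2 13 = 115 := by decide
set_option maxRecDepth 4000 in
lemma vc14 : visCount2 14 = 127 := by decide
set_option maxRecDepth 4000 in
lemma vc15 : visCount2 15 = 143 := by decide

theorem stmt15 (L : ℕ) (hL : 9 ≤ L) :
    (visCount2 L : ℝ) / (L : ℝ) ^ 2 ≥ 6 / Real.pi ^ 2 - Real.log L / L := by
  have hL0 : (0:ℝ) < L := by exact_mod_cast (by omega : 0 < L)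
  rcases lt_or_ge L 16 with hsmall | hbig
  · -- small cases 9 ≤ L ≤ 15
    have hlog2 : (2:ℝ) ≤ Real.log L := by
      rw [Real.le_log_iff_exp_le hL0]
      have h1 : Real.exp 1 < 2.7182818286 := Real.exp_one_lt_d9
      have h2 : Real.exp 2 = Real.exp 1 * Real.exp 1 := by
        rw [← Real.exp_add]; norm_num
      have h3 : Real.exp 2 ≤ 9 := by nlinarith [Real.exp_pos 1]
      calc Real.exp 2 ≤ 9 := h3
        _ ≤ (L:ℝ) := by exact_mod_cast hL
    have hπsq : (9.8696:ℝ) ≤ π^2 := by nlinarith [Real.pi_gt_d6]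
    have h6 : 6/π^2 ≤ 6/(9.8696:ℝ) := by
      gcongr
    have hlogdiv : (2:ℝ)/L ≤ Real.log L / L := by gcongr
    have key : (6:ℝ)/(9.8696:ℝ) ≤ (visCount2 L:ℝ)/(L:ℝ)^2 + 2/L := by
      interval_cases L <;>
        simp only [vc9, vc10, vc11, vc12, vc13, vc14, vc15] <;> norm_num
    have : 6/π^2 - Real.log L / L ≤ (visCount2 L:ℝ)/(L:ℝ)^2 := by linarith
    exact this
  · -- main case L ≥ 16
    have hL1 : 1 ≤ L := by omega
    -- identity over ℝ
    have hid : (visCount2 L : ℝ) = ∑ d ∈ Icc 1 L, (μ d:ℝ) * (((L/d : ℕ)):ℝ)^2 := by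
      have h := congrArg (Int.cast : ℤ → ℝ) (visCount2_eq L)
      push_cast at h
      exact h
    have hins : Icc 1 L = insert 1 (Icc 2 L) := by
      ext x; simp only [mem_Icc, mem_insert]; omega
    have h1mem : (1:ℕ) ∉ Icc 2 L := by simp
    have hid2 : (visCount2 L : ℝ)
        = (L:ℝ)^2 + ∑ d ∈ Icc 2 L, (μ d:ℝ) * (((L/d : ℕ)):ℝ)^2 := by
      rw [hid, hins, Finset.sum_insert h1mem]
      norm_num [moebius_apply_one]
    -- termwise lower bound
    have hterm : ∀ d ∈ Icc 2 L, (μ d:ℝ) * (((L/d : ℕ)):ℝ)^2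
        ≥ (μ d:ℝ) * ((L:ℝ)/d)^2 - ((μ d:ℝ)^2 + (μ d:ℝ)) * ((L:ℝ)/d) := by
      intro d hd
      simp only [mem_Icc] at hd
      have hdpos : 0 < d := by omega
      have hd0 : (0:ℝ) < d := by exact_mod_cast hdpos
      have hqx : (((L/d : ℕ)):ℝ) ≤ (L:ℝ)/d := Nat.cast_div_le
      have hq0 : (0:ℝ) ≤ (((L/d : ℕ)):ℝ) := by positivity
      have hx1 : (1:ℝ) ≤ (L:ℝ)/d := by
        rw [le_div_iff₀ hd0, one_mul]
        exact_mod_cast (by omega : d ≤ L)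
      have hxq1 : (L:ℝ)/d < (((L/d : ℕ)):ℝ) + 1 := by
        have h2 : L < (L/d + 1) * d := (Nat.div_lt_iff_lt_mul hdpos).mp (Nat.lt_succ_self _)
        have h3 : (L:ℝ) < ((((L/d):ℕ):ℝ) + 1) * d := by exact_mod_cast h2
        rw [div_lt_iff₀ hd0]
        exact h3
      rcases moebius_eq_or d with h | h | h <;> rw [h] <;> push_cast <;> nlinarith
    have hsum1 : (visCount2 L : ℝ)
        ≥ (L:ℝ)^2 + ∑ d ∈ Icc 2 L, ((μ d:ℝ) * ((L:ℝ)/d)^2 - ((μ d:ℝ)^2 + (μ d:ℝ)) * ((L:ℝ)/d)) := by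
      rw [hid2]
      gcongr with d hd
      exact hterm d hd
    -- rewrite the sums
    have hS1 : ∑ d ∈ Icc 2 L, (μ d:ℝ) * ((L:ℝ)/d)^2
        = (L:ℝ)^2 * ∑ d ∈ Icc 2 L, (μ d:ℝ)/(d:ℝ)^2 := by
      rw [Finset.mul_sum]
      refine Finset.sum_congr rfl fun d hd => ?_
      simp only [mem_Icc] at hd
      have hdne : (d:ℝ) ≠ 0 := by exact_mod_cast (by omega : d ≠ 0)
      field_simp
    have hS2 : ∑ d ∈ Icc 2 L, ((μ d:ℝ)^2 + (μ d:ℝ)) * ((L:ℝ)/d)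
        = (L:ℝ) * ∑ d ∈ Icc 2 L, ((μ d:ℝ)^2 + (μ d:ℝ))/d := by
      rw [Finset.mul_sum]
      refine Finset.sum_congr rfl fun d hd => ?_
      simp only [mem_Icc] at hd
      have hdne : (d:ℝ) ≠ 0 := by exact_mod_cast (by omega : d ≠ 0)
      field_simp
    set A := ∑ d ∈ Icc 2 L, (μ d:ℝ)/(d:ℝ)^2 with hA
    set B := ∑ d ∈ Icc 2 L, ((μ d:ℝ)^2 + (μ d:ℝ))/d with hB
    have hcount : (visCount2 L : ℝ) ≥ (L:ℝ)^2 + ((L:ℝ)^2 * A - (L:ℝ) * B) := by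
      have := hsum1
      rw [Finset.sum_sub_distrib, hS1, hS2] at this
      linarith
    have hP : 6/π^2 - 1/(L:ℝ) ≤ 1 + A := by
      have h := partial_lower L hL1
      rw [hins, Finset.sum_insert h1mem] at h
      have h1 : (μ 1:ℝ)/((1:ℕ):ℝ)^2 = 1 := by norm_num [moebius_apply_one]
      rw [h1] at h
      exact h
    have hQ2 : ∑ d ∈ Icc 2 L, (μ d:ℝ)/d ≤ 0 := by
      have h := mu_div_sum_le_one L hL1
      rw [hins, Finset.sum_insert h1mem] at h
      have h1 : (μ 1:ℝ)/((1:ℕ):ℝ) = 1 := by norm_num [moebius_apply_one]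
      rw [h1] at h
      linarith
    have hQ : B ≤ Real.log L - 1 := by
      have hsplit : B = (∑ d ∈ Icc 2 L, ((μ d:ℝ))^2/d) + ∑ d ∈ Icc 2 L, (μ d:ℝ)/d := by
        rw [hB, ← Finset.sum_add_distrib]
        exact Finset.sum_congr rfl fun d _ => by rw [add_div]
      rw [hsplit]
      linarith [sf_harmonic_le L hbig, hQ2]
    have m1 : (L:ℝ)^2*(6/π^2 - 1/(L:ℝ)) ≤ (L:ℝ)^2*(1+A) :=
      mul_le_mul_of_nonneg_left hP (by positivity)
    have m2 : (L:ℝ)*B ≤ (L:ℝ)*(Real.log L - 1) :=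
      mul_le_mul_of_nonneg_left hQ hL0.le
    have e1 : (L:ℝ)^2*(6/π^2 - 1/(L:ℝ)) = 6/π^2*(L:ℝ)^2 - L := by
      field_simp
    have e2 : (L:ℝ)^2*(1+A) = (L:ℝ)^2 + (L:ℝ)^2*A := by ring
    have e3 : (L:ℝ)*(Real.log L - 1) = (L:ℝ)*Real.log L - L := by ring
    have main : 6/π^2 * (L:ℝ)^2 - Real.log L * (L:ℝ) ≤ (visCount2 L:ℝ) := by
      linarith [hcount, m1, m2]
    rw [ge_iff_le, ← sub_nonneg]
    have expand : (visCount2 L:ℝ)/(L:ℝ)^2 - (6/π^2 - Real.log L/(L:ℝ))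
        = ((visCount2 L:ℝ) - (6/π^2*(L:ℝ)^2 - Real.log L * (L:ℝ)))/(L:ℝ)^2 := by
      have hπ0 : (π:ℝ) ≠ 0 := Real.pi_ne_zero
      have hLne : (L:ℝ) ≠ 0 := ne_of_gt hL0
      field_simp
    rw [expand]
    have hnum : (0:ℝ) ≤ (visCount2 L:ℝ) - (6/π^2*(L:ℝ)^2 - Real.log L * (L:ℝ)) := by
      linarith
    positivity
end

section
/- Let k ≥ 2 and let G = ∏_{p prime} ℤ/pℤ. Call a point x = (x₁,…,x_k) ∈ G^k visible from 0 if for every prime p there exists some 1 ≤ j ≤ k with x_j(p) ≠ 0 in ℤ/pℤ. Let 𝟏 ∈ G denote the element whose p-th coordinate is 1 mod p for every prime p. Then for every x ∈ G^k, limsup_{L→∞} (1/L^k) · |{ (n₁,…,n_k) ∈ {0,1,…,L−1}^k : (x₁ + n₁·𝟏, …, x_k + n_k·𝟏) is visible from 0 }| ≤ 1/ζ(k). -/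
open scoped Classical

lemma fiber_card_le (M L : ℕ) (T : Finset ℕ)
    (hL : ∀ a ∈ T, a < L) (hcong : ∀ a ∈ T, ∀ b ∈ T, a % M = b % M) :
    T.card ≤ L / M + 1 := by
  have h : T.card ≤ (Finset.range (L / M + 1)).card := by
    apply Finset.card_le_card_of_injOn (fun a => a / M)
    · intro a ha
      simp only [Finset.mem_coe, Finset.mem_range]
      exact Nat.lt_succ_of_le (Nat.div_le_div_right (le_of_lt (hL a ha)))
    · intro a ha b hb hab
      simp only [Finset.mem_coe] at ha hb
      calc a = M * (a / M) + a % M := (Nat.div_add_mod a M).symm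
        _ = M * (b / M) + b % M := by rw [show a / M = b / M from hab, hcong a ha b hb]
        _ = b := Nat.div_add_mod b M
  simpa using h

lemma mod_prod_eq (S : Finset Nat.Primes) (a b : ℕ)
    (h : ∀ p ∈ S, a % (p : ℕ) = b % (p : ℕ)) :
    a % (∏ p ∈ S, (p : ℕ)) = b % (∏ p ∈ S, (p : ℕ)) := by
  have hdvd : ((∏ p ∈ S, (p : ℕ) : ℕ) : ℤ) ∣ (b : ℤ) - a := by
    push_cast
    apply Finset.prod_dvd_of_coprime
    · intro p hp q hq hpq
      refine Nat.isCoprime_iff_coprime.mpr ((Nat.coprime_primes p.prop q.prop).mpr ?_)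
      exact fun hco => hpq (Subtype.ext hco)
    · intro p hp
      exact_mod_cast (Nat.modEq_iff_dvd).mp (h p hp)
  exact Nat.modEq_iff_dvd.mpr hdvd

/-- The compact group `G = ∏_{p prime} ℤ/pℤ`. -/
def GGroup := ∀ p : Nat.Primes, ZMod (p : ℕ)

/-- The number of `(n₁,…,n_k) ∈ {0,…,L-1}^k` such that `x + n·𝟏` is visible
from `0` in `G^k`, i.e. for every prime `p` some coordinate of the shifted
point is nonzero mod `p`.  (The `p`-th coordinate of `x_j + n_j·𝟏` is
`x_j(p) + n_j mod p`.) -/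
noncomputable def visShiftCount (k : ℕ) (x : Fin k → GGroup) (L : ℕ) : ℕ :=
  (((Fintype.piFinset fun _ : Fin k => Finset.range L)).filter
      (fun n => ∀ p : Nat.Primes, ∃ j : Fin k,
        x j p + ((n j : ℕ) : ZMod (p : ℕ)) ≠ 0)).card

lemma count_le (k : ℕ) (x : Fin k → GGroup) (S : Finset Nat.Primes) (L : ℕ) :
    visShiftCount k x L ≤
      (L / (∏ p ∈ S, (p : ℕ)) + 1) ^ k * ∏ p ∈ S, ((p : ℕ) ^ k - 1) := by
  classical
  set M := ∏ p ∈ S, (p : ℕ) with hMdef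
  set A := ((Fintype.piFinset fun _ : Fin k => Finset.range L)).filter
      (fun n => ∀ p : Nat.Primes, ∃ j : Fin k,
        x j p + ((n j : ℕ) : ZMod (p : ℕ)) ≠ 0) with hAdef
  have hcount : visShiftCount k x L = A.card := rfl
  set f : (Fin k → ℕ) → ({q : Nat.Primes // q ∈ S} → Fin k → ℕ) :=
    fun n p j => n j % ((p : Nat.Primes) : ℕ) with hfdef
  have key : A.card ≤ (L / M + 1) ^ k * (A.image f).card := by
    apply Finset.card_le_mul_card_image
    intro g hg
    -- fiber bound
    have hsub : (A.filter fun n => f n = g) ⊆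
        Fintype.piFinset (fun j : Fin k => (Finset.range L).filter
          (fun m => ∀ p : {q : Nat.Primes // q ∈ S}, m % ((p : Nat.Primes) : ℕ) = g p j)) := by
      intro n hn
      rw [Finset.mem_filter] at hn
      obtain ⟨hnA, hfn⟩ := hn
      rw [hAdef, Finset.mem_filter, Fintype.mem_piFinset] at hnA
      rw [Fintype.mem_piFinset]
      intro j
      rw [Finset.mem_filter]
      refine ⟨hnA.1 j, fun p => ?_⟩
      rw [← hfn]
    calc (A.filter fun n => f n = g).card
        ≤ (Fintype.piFinset (fun j : Fin k => (Finset.range L).filter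
            (fun m => ∀ p : {q : Nat.Primes // q ∈ S},
              m % ((p : Nat.Primes) : ℕ) = g p j))).card := Finset.card_le_card hsub
      _ = ∏ j : Fin k, ((Finset.range L).filter
            (fun m => ∀ p : {q : Nat.Primes // q ∈ S},
              m % ((p : Nat.Primes) : ℕ) = g p j)).card := Fintype.card_piFinset _
      _ ≤ ∏ _j : Fin k, (L / M + 1) := by
          apply Finset.prod_le_prod'
          intro j _
          apply fiber_card_le
          · intro a ha
            simpa using (Finset.mem_filter.mp ha).1
          · intro a ha b hb
            have ha' := (Finset.mem_filter.mp ha).2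
            have hb' := (Finset.mem_filter.mp hb).2
            apply mod_prod_eq
            intro p hp
            rw [ha' ⟨p, hp⟩, hb' ⟨p, hp⟩]
      _ = (L / M + 1) ^ k := by simp
  have himg : (A.image f).card ≤ ∏ p ∈ S, ((p : ℕ) ^ k - 1) := by
    have hsub : A.image f ⊆ Fintype.piFinset (fun p : {q : Nat.Primes // q ∈ S} =>
        (Fintype.piFinset fun _ : Fin k =>
          Finset.range ((p : Nat.Primes) : ℕ)).erase
            (fun j => (-(x j (p : Nat.Primes))).val)) := by
      intro g hg
      rw [Finset.mem_image] at hg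
      obtain ⟨n, hnA, rfl⟩ := hg
      rw [hAdef, Finset.mem_filter] at hnA
      obtain ⟨-, hvis⟩ := hnA
      rw [Fintype.mem_piFinset]
      intro p
      have hppos : 0 < ((p : Nat.Primes) : ℕ) := (p : Nat.Primes).prop.pos
      haveI : NeZero ((p : Nat.Primes) : ℕ) := ⟨hppos.ne'⟩
      rw [Finset.mem_erase]
      constructor
      · obtain ⟨j, hj⟩ := hvis (p : Nat.Primes)
        intro heq
        apply hj
        have hje : n j % ((p : Nat.Primes) : ℕ)
            = (-(x j (p : Nat.Primes))).val := congrFun heq j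
        have : ((n j : ℕ) : ZMod ((p : Nat.Primes) : ℕ)) = -(x j (p : Nat.Primes)) := by
          rw [← ZMod.natCast_mod, hje, ZMod.natCast_zmod_val]
        rw [this]
        ring
      · rw [Fintype.mem_piFinset]
        intro j
        simpa using Nat.mod_lt _ hppos
    calc (A.image f).card
        ≤ _ := Finset.card_le_card hsub
      _ = ∏ p : {q : Nat.Primes // q ∈ S}, (((p : Nat.Primes) : ℕ) ^ k - 1) := by
          rw [Fintype.card_piFinset]
          apply Finset.prod_congr rfl
          intro p _
          haveI : NeZero ((p : Nat.Primes) : ℕ) := ⟨(p : Nat.Primes).prop.pos.ne'⟩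
          rw [Finset.card_erase_of_mem, Fintype.card_piFinset]
          · simp [Finset.prod_const]
          · rw [Fintype.mem_piFinset]
            intro j
            simpa using (ZMod.val_lt _)
      _ = ∏ p ∈ S, ((p : ℕ) ^ k - 1) := by
          rw [← Finset.prod_coe_sort S (fun p => (p : ℕ) ^ k - 1)]
  rw [hcount]
  exact key.trans (Nat.mul_le_mul_left _ himg)

lemma limsup_le_P (k : ℕ) (hk : 2 ≤ k) (x : Fin k → GGroup) (S : Finset Nat.Primes) :
    Filter.limsup (fun L : ℕ => (visShiftCount k x L : ℝ) / (L : ℝ) ^ k) Filter.atTop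
      ≤ ∏ p ∈ S, (1 - 1 / ((p : ℕ) : ℝ) ^ k) := by
  classical
  set M := ∏ p ∈ S, (p : ℕ) with hM
  have hMpos : 0 < M := Finset.prod_pos (fun p _ => p.prop.pos)
  set C := ∏ p ∈ S, ((p : ℕ) ^ k - 1) with hC
  set F : ℕ → ℝ := fun L => (visShiftCount k x L : ℝ) / (L : ℝ) ^ k with hF
  set g : ℕ → ℝ := fun L => (C : ℝ) / (M : ℝ) ^ k * (1 + (M : ℝ) / (L : ℝ)) ^ k with hg
  have hMR : (0:ℝ) < (M:ℝ) := by exact_mod_cast hMpos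
  have hfg : ∀ᶠ L in Filter.atTop, F L ≤ g L := by
    filter_upwards [Filter.eventually_ge_atTop 1] with L hL
    have hLR : (0:ℝ) < (L:ℝ) := by exact_mod_cast hL
    have h1 : (visShiftCount k x L : ℝ) ≤ (((L / M + 1) ^ k * C : ℕ) : ℝ) :=
      Nat.cast_le.mpr (count_le k x S L)
    push_cast at h1
    have h2 : ((L / M : ℕ) : ℝ) + 1 ≤ (L : ℝ) / M * (1 + (M:ℝ) / L) := by
      have hd : ((L / M : ℕ) : ℝ) ≤ (L : ℝ) / (M : ℝ) := Nat.cast_div_le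
      have heq : (L : ℝ) / M * (1 + (M:ℝ) / L) = (L:ℝ) / M + 1 := by
        field_simp
      rw [heq]
      linarith
    have h3 : (((L / M : ℕ) : ℝ) + 1) ^ k ≤ ((L:ℝ)/M)^k * (1 + (M:ℝ)/L)^k := by
      rw [← mul_pow]
      exact pow_le_pow_left₀ (by positivity) h2 k
    have hCpos : (0:ℝ) ≤ (C:ℝ) := Nat.cast_nonneg _
    calc F L = (visShiftCount k x L : ℝ) / (L : ℝ) ^ k := rfl
      _ ≤ ((((L / M : ℕ) : ℝ) + 1) ^ k * (C:ℝ)) / (L : ℝ) ^ k := by gcongr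
      _ ≤ (((L:ℝ)/M)^k * (1 + (M:ℝ)/L)^k * (C:ℝ)) / (L : ℝ) ^ k := by gcongr
      _ = g L := by
          rw [hg]
          field_simp
          rw [div_pow, div_mul_eq_mul_div, div_mul_cancel₀ _ (pow_ne_zero k hMR.ne')]
          ring
  have hgt : Filter.Tendsto g Filter.atTop (nhds ((C:ℝ)/(M:ℝ)^k)) := by
    have h0 : Filter.Tendsto (fun L : ℕ => (M:ℝ)/(L:ℝ)) Filter.atTop (nhds 0) :=
      tendsto_const_div_atTop_nhds_zero_nat _
    have h1 : Filter.Tendsto (fun L : ℕ => (1 + (M:ℝ)/(L:ℝ))^k) Filter.atTop (nhds 1) := by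
      have h2 := (tendsto_const_nhds (x := (1:ℝ)) (f := Filter.atTop (α := ℕ))).add h0
      have h3 := h2.pow k
      simpa using h3
    have := h1.const_mul ((C:ℝ)/(M:ℝ)^k)
    simpa [hg] using this
  have hlim : Filter.limsup F Filter.atTop ≤ (C:ℝ)/(M:ℝ)^k := by
    have hco : Filter.IsCoboundedUnder (· ≤ ·) Filter.atTop F :=
      Filter.isCoboundedUnder_le_of_eventually_le _
        (x := 0) (Filter.Eventually.of_forall (fun L => by positivity))
    have := Filter.limsup_le_limsup hfg hco hgt.isBoundedUnder_le
    rwa [hgt.limsup_eq] at this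
  refine hlim.trans (le_of_eq ?_)
  rw [hC, hM, Nat.cast_prod, Nat.cast_prod, ← Finset.prod_pow, ← Finset.prod_div_distrib]
  refine Finset.prod_congr rfl fun p _ => ?_
  have hp1 : (1:ℕ) ≤ (p:ℕ)^k := Nat.one_le_pow _ _ p.prop.pos
  have hpR : (0:ℝ) < ((p:ℕ):ℝ) := by exact_mod_cast p.prop.pos
  rw [Nat.cast_sub hp1]
  push_cast
  field_simp

noncomputable def zfhom (k : ℕ) (hk0 : k ≠ 0) : ℕ →*₀ ℝ where
  toFun n := ((n:ℝ)^k)⁻¹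
  map_zero' := by simp [zero_pow hk0]
  map_one' := by simp
  map_mul' m n := by push_cast; rw [mul_pow, mul_inv]

lemma tendsto_P (k : ℕ) (hk : 2 ≤ k) :
    Filter.Tendsto (fun S : Finset Nat.Primes => ∏ p ∈ S, (1 - 1 / ((p:ℕ):ℝ) ^ k))
      Filter.atTop (nhds (1 / zetaR k)) := by
  classical
  have hk0 : k ≠ 0 := by omega
  set f : ℕ →*₀ ℝ := zfhom k hk0 with hfdef
  have hsum0 : Summable (fun n : ℕ => 1 / (n:ℝ)^k) := Real.summable_one_div_nat_pow.mpr (by omega)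
  have hsum : Summable (fun n : ℕ => ‖f n‖) := by
    refine hsum0.congr fun n => ?_
    have hfn : f n = ((n:ℝ)^k)⁻¹ := rfl
    rw [hfn, Real.norm_eq_abs, abs_of_nonneg (by positivity), one_div]
  have hzeta : ∑' n, f n = zetaR k := by
    unfold zetaR
    exact tsum_congr fun n => (one_div _).symm
  have hprod := EulerProduct.eulerProduct_completely_multiplicative_hasProd hsum
  rw [hzeta] at hprod
  have hzpos : (1:ℝ) ≤ zetaR k := by
    have h1 : 1 / ((1:ℕ):ℝ)^k ≤ zetaR k := Summable.le_tsum hsum0 1 (fun n _ => by positivity)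
    simpa using h1
  have hzne : zetaR k ≠ 0 := by linarith
  have ht : Filter.Tendsto (fun S : Finset Nat.Primes => ∏ p ∈ S, (1 - f p)⁻¹)
      Filter.atTop (nhds (zetaR k)) := hprod
  have ht2 := ht.inv₀ hzne
  rw [← one_div] at ht2
  refine ht2.congr fun S => ?_
  rw [← Finset.prod_inv_distrib]
  refine Finset.prod_congr rfl fun p _ => ?_
  rw [inv_inv, one_div]
  rfl

theorem stmt18 (k : ℕ) (hk : 2 ≤ k) (x : Fin k → GGroup) :
    Filter.limsup (fun L : ℕ => (visShiftCount k x L : ℝ) / (L : ℝ) ^ k)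
        Filter.atTop
      ≤ 1 / zetaR k :=
  ge_of_tendsto' (tendsto_P k hk) (fun S => limsup_le_P k hk x S)
end
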